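/- arXiv:1101.4844 — 7 statements merged into one kernel-verified Lean document; each statement's English description precedes it below -/
import Mathlib

section
/- Let R and S be finite rings with homogeneous weights w_R and w_S of average values γ_R and γ_S respectively. Define w on R ⊕ S by w(r,s) = γ(1 − (1 − w_R(r)/γ_R)(1 − w_S(s)/γ_S)) for a real constant γ. Then w is a homogeneous weight on R ⊕ S with average value γ; equivalently, 1 − w_{R⊕S}(r,s)/γ_{R⊕S} = (1 − w_R(r)/γ_R)(1 − w_S(s)/γ_S). -/
/-- `w : R → ℝ` is a (left) homogeneous weight on the finite ring `R` with average
value `γ`: `w 0 = 0`, `w` depends only on the left principal ideal `Rx`, and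
`∑_{y ∈ Rx} w y = γ·|Rx|` for all nonzero `x`. -/
def IsHomWeight (R : Type*) [Ring R] [Fintype R] (w : R → ℝ) (γ : ℝ) : Prop :=
  w 0 = 0 ∧
  (∀ x y : R, Submodule.span R ({x} : Set R) = Submodule.span R {y} → w x = w y) ∧
  (∀ x : R, x ≠ 0 →
    ∑ᶠ y ∈ (Submodule.span R ({x} : Set R) : Set R), w y
      = γ * Nat.card (Submodule.span R ({x} : Set R)))

/-!
Write a weight as `w = γ (1 - f)`. For `γ ≠ 0`, `w` is homogeneous with average value `γ`
exactly when `f 0 = 1`, `f` is constant on generators of each left principal ideal, and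
`∑_{y ∈ Rx} f y = 0` for `x ≠ 0`; none of this involves `γ`. Since `R(x, y) = Rx × Sy`,
the sum of `f_R(r) f_S(s)` over `R(x, y)` is the product of the two sums, and one of them
vanishes when `(x, y) ≠ 0`.
-/

open Submodule

theorem finsum_mem_mul_one_sub {α M : Type*} [Ring M] {s : Set α} (hs : s.Finite) (γ : M)
    (f : α → M) :
    ∑ᶠ a ∈ s, γ * (1 - f a) = γ * (Nat.card s - ∑ᶠ a ∈ s, f a) := by
  rw [← mul_finsum_mem' _ _ hs, finsum_mem_sub_distrib _ _ hs, Nat.card_coe_set_eq,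
    ← finsum_one, Nat.cast_finsum_mem hs, Nat.cast_one]

theorem finsum_mem_prod_mul {α β M : Type*} [NonUnitalNonAssocSemiring M] {s : Set α} {t : Set β}
    (hs : s.Finite) (ht : t.Finite) (f : α → M) (g : β → M) :
    ∑ᶠ p ∈ s ×ˢ t, f p.1 * g p.2 = (∑ᶠ a ∈ s, f a) * ∑ᶠ b ∈ t, g b := by
  rw [finsum_mem_eq_finite_toFinset_sum _ (hs.prod ht), finsum_mem_eq_finite_toFinset_sum _ hs,
    finsum_mem_eq_finite_toFinset_sum _ ht, ← Set.Finite.toFinset_prod, Finset.sum_product,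
    Finset.sum_mul_sum]

theorem Ideal.span_singleton_mk_eq_prod {R S : Type*} [Semiring R] [Semiring S] (x : R) (y : S) :
    Submodule.span (R × S) {(x, y)} =
      Ideal.prod (Submodule.span R {x}) (Submodule.span S {y}) := by
  simpa [Set.singleton_prod_singleton] using Ideal.span_prod (s := {x}) (t := {y}) (by simp)

/-- The normalized form `1 - w / γ` of a homogeneous weight `w` with average value `γ`
(by the Möbius description, the function `x ↦ μ(0, Rx) / |R^× x|`). -/
def IsHomCoweight (R : Type*) [Ring R] (f : R → ℝ) : Prop :=
  f 0 = 1 ∧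
  (∀ x y : R, span R ({x} : Set R) = span R {y} → f x = f y) ∧
  ∀ x : R, x ≠ 0 → ∑ᶠ y ∈ (span R ({x} : Set R) : Set R), f y = 0

theorem isHomWeight_mul_one_sub_iff {R : Type*} [Ring R] [Fintype R] {γ : ℝ} (hγ : γ ≠ 0)
    (f : R → ℝ) : IsHomWeight R (fun x => γ * (1 - f x)) γ ↔ IsHomCoweight R f := by
  refine and_congr ?_ (and_congr ?_ ?_)
  · rw [mul_eq_zero, or_iff_right hγ, sub_eq_zero, eq_comm]
  · simp only [mul_right_inj' hγ, sub_right_inj]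
  · refine forall_congr' fun x => imp_congr_right fun _ => ?_
    rw [finsum_mem_mul_one_sub (Set.toFinite _), mul_right_inj' hγ]
    exact sub_eq_self

theorem IsHomWeight.isHomCoweight {R : Type*} [Ring R] [Fintype R] {w : R → ℝ} {γ : ℝ}
    (hw : IsHomWeight R w γ) (hγ : γ ≠ 0) : IsHomCoweight R (fun x => 1 - w x / γ) := by
  rw [← isHomWeight_mul_one_sub_iff hγ]
  convert hw using 2 with x
  field_simp
  ring

theorem IsHomCoweight.prod {R S : Type*} [Ring R] [Ring S] [Finite R] [Finite S]
    {f : R → ℝ} {g : S → ℝ} (hf : IsHomCoweight R f) (hg : IsHomCoweight S g) :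
    IsHomCoweight (R × S) (fun p => f p.1 * g p.2) := by
  refine ⟨by simp [hf.1, hg.1], ?_, ?_⟩
  · rintro ⟨x, y⟩ ⟨x', y'⟩ h
    simp only [Ideal.span_singleton_mk_eq_prod, Ideal.prod_inj] at h
    simp only [hf.2.1 x x' h.1, hg.2.1 y y' h.2]
  · rintro ⟨x, y⟩ hxy
    rw [Ideal.span_singleton_mk_eq_prod, Ideal.coe_prod,
      finsum_mem_prod_mul (Set.toFinite _) (Set.toFinite _)]
    rcases ne_or_eq x 0 with hx | rfl
    · rw [hf.2.2 x hx, zero_mul]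
    · rw [hg.2.2 y fun hy => hxy (by rw [hy, Prod.mk_zero_zero]), mul_zero]

/-- If `w_R` and `w_S` are homogeneous weights on finite rings `R` and `S`
with (nonzero) average values `γ_R` and `γ_S`, then
`w(r,s) = γ(1 − (1 − w_R(r)/γ_R)(1 − w_S(s)/γ_S))` is a homogeneous weight on `R ⊕ S`
with average value `γ`; in particular `1 − w(r,s)/γ = (1 − w_R(r)/γ_R)(1 − w_S(s)/γ_S)`. -/
theorem stmt3 (R S : Type*) [Ring R] [Ring S] [Fintype R] [Fintype S]
    (wR : R → ℝ) (wS : S → ℝ) (γR γS γ : ℝ) (hγR : γR ≠ 0) (hγS : γS ≠ 0) (hγ : γ ≠ 0)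
    (hwR : IsHomWeight R wR γR) (hwS : IsHomWeight S wS γS) :
    IsHomWeight (R × S)
      (fun p => γ * (1 - (1 - wR p.1 / γR) * (1 - wS p.2 / γS))) γ ∧
    ∀ r : R, ∀ s : S,
      1 - (γ * (1 - (1 - wR r / γR) * (1 - wS s / γS))) / γ
        = (1 - wR r / γR) * (1 - wS s / γS) := by
  refine ⟨?_, fun r s => by rw [mul_div_cancel_left₀ _ hγ, sub_sub_cancel]⟩
  exact (isHomWeight_mul_one_sub_iff hγ _).2
    ((hwR.isHomCoweight hγR).prod (hwS.isHomCoweight hγS))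
end

section
/- Let R be a finite Frobenius ring with generating character χ. Then the function w(x) = γ(1 − (1/|R^×|) ∑_{u ∈ R^×} χ(xu)) is real-valued and is a homogeneous weight on R with average value γ, i.e., w(0)=0, w(x)=w(y) whenever Rx=Ry, and ∑_{y ∈ Rx} w(y) = γ|Rx| for nonzero x. -/
/-- `χ` is a (left) generating character of the finite ring `R`: every additive
character of `R` has the form `x ↦ χ(r x)` for some `r ∈ R`. -/
def IsGeneratingChar (R : Type*) [Ring R] [Fintype R] (χ : AddChar R ℂ) : Prop :=
  ∀ φ : AddChar R ℂ, ∃ r : R, ∀ x : R, φ x = χ (r * x)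

open Finset

instance Monoid.isPreorder_dvd {M : Type*} [Monoid M] : IsPreorder M (· ∣ ·) where
  refl := dvd_refl
  trans _ _ _ := dvd_trans

theorem Finset.sum_filter_antisymmRel_eq_zero {α M : Type*} [Fintype α] [AddCommMonoid M]
    (r : α → α → Prop) [IsPreorder α r] [DecidableRel r] {f : α → M}
    (hf : ∀ a, ∑ b with r a b, f b = 0) (a : α) : ∑ b with AntisymmRel r a b, f b = 0 := by
  classical
  induction hn : #{b | r a b} using Nat.strong_induction_on generalizing a with
  | _ n ih =>
  have hsplit : ∑ b with r a b, f b
      = ∑ b with AntisymmRel r a b, f b + ∑ b with r a b ∧ ¬ r b a, f b := by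
    rw [← sum_filter_add_sum_filter_not _ (fun b => r b a), filter_filter, filter_filter]
    rfl
  -- The strict upper set of `a` is a union of classes lying strictly above `a`.
  have hstrict : ∑ b with r a b ∧ ¬ r b a, f b = 0 := by
    rw [← sum_fiberwise _ (Quotient.mk (AntisymmRel.setoid α r))]
    refine sum_eq_zero fun q _ => ?_
    induction q using Quotient.inductionOn with | h c => ?_
    by_cases hac : r a c ∧ ¬ r c a
    · have hcls : ({b | r a b ∧ ¬ r b a} : Finset α).filter
          (fun b => Quotient.mk (AntisymmRel.setoid α r) b = ⟦c⟧)
            = ({b | AntisymmRel r c b} : Finset α) := by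
        ext b
        simp only [mem_filter, mem_univ, true_and, Quotient.eq, AntisymmRel.setoid_r]
        exact ⟨fun h => h.2.symm, fun h => ⟨⟨_root_.trans hac.1 h.1,
          fun hba => hac.2 (_root_.trans h.1 hba)⟩, h.symm⟩⟩
      have hlt : #{b | r c b} < n := by
        rw [← hn]
        refine card_lt_card ⟨fun b hb => ?_, fun h => hac.2 ?_⟩
        · simp only [mem_filter, mem_univ, true_and] at hb ⊢
          exact _root_.trans hac.1 hb
        · simpa using h (by simpa using refl_of r a)
      rw [hcls]
      exact ih _ hlt c rfl
    · refine sum_eq_zero fun b hb => absurd ?_ hac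
      simp only [mem_filter, mem_univ, true_and, Quotient.eq, AntisymmRel.setoid_r] at hb
      exact ⟨_root_.trans hb.1.1 hb.2.1, fun hca => hb.1.2 (_root_.trans hb.2.1 hca)⟩
  have := hf a
  rwa [hsplit, hstrict, add_zero] at this

namespace AddChar

variable {G R : Type*} [AddGroup G] [CommRing R] [IsDomain R] [CharZero R]

lemma sum_addSubgroup_eq_zero (ψ : AddChar G R) {H : AddSubgroup G} [Fintype H] {g : G}
    (hg : g ∈ H) (hψg : ψ g ≠ 1) : ∑ h : H, ψ h = 0 :=
  (sum_eq_zero_iff_ne_zero (ψ := ψ.compAddMonoidHom H.subtype)).2 <|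
    ne_one_iff.2 ⟨⟨g, hg⟩, hψg⟩

end AddChar

lemma Fintype.sum_units_eq_sum_filter_dvd_one {M A : Type*} [Monoid M] [Fintype M]
    [DecidableEq M] [DecidableRel (α := M) (· ∣ ·)] [AddCommMonoid A] (f : M → A) :
    ∑ u : Mˣ, f u = ∑ b with b ∣ 1, f b := by
  refine (sum_map univ ⟨Units.val, Units.val_injective⟩ f).symm.trans
    (congrArg (Finset.sum · f) ?_)
  ext b
  simp only [mem_map, mem_univ, true_and, Function.Embedding.coeFn_mk, mem_filter]
  exact ⟨fun ⟨u, hu⟩ => hu ▸ u.isUnit.dvd,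
    fun ⟨c, hc⟩ => ⟨(IsUnit.of_mul_eq_one c hc.symm).unit, rfl⟩⟩

namespace IsGeneratingChar

variable {R : Type*} [Ring R] [Fintype R] {χ : AddChar R ℂ}

lemma eq_zero_of_forall_mul_eq_one (hχ : IsGeneratingChar R χ) {a : R}
    (ha : ∀ s, χ (a * s) = 1) : a = 0 := by
  have hsurj : Function.Surjective χ.mulShift := fun φ =>
    (hχ φ).imp fun r hr => by ext x; exact (hr x).symm
  have hinj : Function.Injective χ.mulShift :=
    (Fintype.bijective_iff_surjective_and_card _).2 ⟨hsurj, AddChar.card_eq.symm⟩ |>.1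
  exact hinj (by ext s; simpa using ha s)

lemma exists_mul_ne_one (hχ : IsGeneratingChar R χ) {a : R} (ha : a ≠ 0) :
    ∃ r, χ (r * a) ≠ 1 := by
  obtain ⟨ψ, hψ⟩ := AddChar.exists_apply_ne_zero.2 ha
  obtain ⟨r, hr⟩ := hχ ψ
  exact ⟨r, hr a ▸ hψ⟩

lemma sum_filter_dvd_eq_zero (hχ : IsGeneratingChar R χ) [DecidableRel (α := R) (· ∣ ·)]
    {z r : R} (hzr : z * r ≠ 0) : ∑ t with r ∣ t, χ (z * t) = 0 := by
  obtain ⟨s, hs⟩ : ∃ s, χ (z * r * s) ≠ 1 := by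
    by_contra! h
    exact hzr (hχ.eq_zero_of_forall_mul_eq_one h)
  classical
  rw [sum_subtype (p := (· ∈ (AddMonoidHom.mulLeft r).range)) _
    (fun t => by simp [dvd_def, eq_comm]) (fun t => χ (z * t))]
  exact (χ.mulShift z).sum_addSubgroup_eq_zero ⟨s, rfl⟩ (by simpa [mul_assoc] using hs)

lemma sum_span_singleton_mul_eq_zero (hχ : IsGeneratingChar R χ) {x : R} (hx : x ≠ 0)
    (u : Rˣ) [Fintype (Submodule.span R {x})] :
    ∑ y : Submodule.span R {x}, χ (y * u) = 0 := by
  obtain ⟨r, hr⟩ := hχ.exists_mul_ne_one (a := x * u) (by simpa using hx)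
  exact (χ.compAddMonoidHom (AddMonoidHom.mulRight (u : R))).sum_addSubgroup_eq_zero
    (H := (Submodule.span R {x}).toAddSubgroup)
    (Submodule.smul_mem _ r (Submodule.mem_span_singleton_self x)) (by simpa [mul_assoc] using hr)

lemma sum_units_mul_eq_of_mul_eq_zero_iff (hχ : IsGeneratingChar R χ) [DecidableEq R]
    {x y : R} (hxy : ∀ s, x * s = 0 ↔ y * s = 0) :
    ∑ u : Rˣ, χ (x * u) = ∑ u : Rˣ, χ (y * u) := by
  classical
  have hdvd : ∀ r, ∑ t with r ∣ t, (χ (x * t) - χ (y * t)) = 0 := by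
    intro r
    rw [sum_sub_distrib, sub_eq_zero]
    by_cases hxr : x * r = 0
    · have hyr := (hxy r).1 hxr
      refine sum_congr rfl fun t ht => ?_
      obtain ⟨c, rfl⟩ := (mem_filter.1 ht).2
      simp [← mul_assoc, hxr, hyr]
    · rw [hχ.sum_filter_dvd_eq_zero hxr, hχ.sum_filter_dvd_eq_zero (mt (hxy r).2 hxr)]
  have := Finset.sum_filter_antisymmRel_eq_zero (· ∣ ·) hdvd 1
  rw [← sub_eq_zero, ← sum_sub_distrib,
    Fintype.sum_units_eq_sum_filter_dvd_one (fun t => χ (x * t) - χ (y * t))]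
  simpa [AntisymmRel] using this

end IsGeneratingChar

lemma im_sum_units_mul_eq_zero {R : Type*} [Ring R] [Fintype R] [DecidableEq R]
    (χ : AddChar R ℂ) (x : R) : (∑ u : Rˣ, χ (x * u)).im = 0 := by
  rw [← Complex.conj_eq_iff_im, map_sum]
  exact Fintype.sum_equiv (Equiv.neg Rˣ) _ _ fun u => by simp [← AddChar.map_neg_eq_conj]

lemma mul_eq_zero_iff_of_span_singleton_eq {R : Type*} [Ring R] {x y : R}
    (h : Submodule.span R {x} = Submodule.span R {y}) (s : R) : x * s = 0 ↔ y * s = 0 := by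
  obtain ⟨a, rfl⟩ := Submodule.mem_span_singleton.1 (h ▸ Submodule.mem_span_singleton_self x)
  obtain ⟨b, hb⟩ := Submodule.mem_span_singleton.1 (h ▸ Submodule.mem_span_singleton_self y)
  rw [smul_eq_mul, smul_eq_mul] at hb
  rw [smul_eq_mul]
  constructor <;> intro hs
  · rw [← hb, mul_assoc, hs, mul_zero]
  · rw [mul_assoc, hs, mul_zero]

/-- On a finite Frobenius ring `R` with generating character `χ`, the
function `x ↦ γ(1 − (1/|R^×|) ∑_{u ∈ R^×} χ(xu))` is real-valued, and its real part is
a homogeneous weight on `R` with average value `γ`. -/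
theorem stmt4 (R : Type*) [Ring R] [Fintype R] [DecidableEq R] (χ : AddChar R ℂ)
    (hχ : IsGeneratingChar R χ) (γ : ℝ) :
    (∀ x : R,
      ((γ : ℂ) * (1 - (1 / (Fintype.card Rˣ : ℂ)) * ∑ u : Rˣ, χ (x * u))).im = 0) ∧
    IsHomWeight R
      (fun x => ((γ : ℂ) * (1 - (1 / (Fintype.card Rˣ : ℂ)) * ∑ u : Rˣ, χ (x * u))).re)
      γ := by
  refine ⟨fun x => ?_, by simp, fun x y h => ?_, fun x hx => ?_⟩
  · simp [-Complex.im_sum, im_sum_units_mul_eq_zero]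
  · simp only [hχ.sum_units_mul_eq_of_mul_eq_zero_iff (mul_eq_zero_iff_of_span_singleton_eq h)]
  · classical
    rw [← finsum_set_coe_eq_finsum_mem, finsum_eq_sum_of_fintype, Nat.card_eq_fintype_card]
    have hvanish : ∑ y : Submodule.span R {x}, ∑ u : Rˣ, χ (y * u) = 0 := by
      rw [sum_comm]
      exact sum_eq_zero fun u _ => hχ.sum_span_singleton_mul_eq_zero hx u
    rw [← Complex.re_sum]
    simp [mul_sub, sum_sub_distrib, ← mul_sum, hvanish, mul_comm]
end

section
/- Let R be a finite local Frobenius ring with residue field GF(q). Then the function w : R → ℝ with w(0) = 0, w(x) = q for nonzero x in soc(R), and w(x) = q − 1 otherwise, is a homogeneous weight on R with average value γ = q − 1. -/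
/-- A finite ring is Frobenius iff it admits a (left) generating character. -/
def IsFrobeniusRing (R : Type*) [Ring R] [Fintype R] : Prop :=
  ∃ χ : AddChar R ℂ, ∀ φ : AddChar R ℂ, ∃ r : R, ∀ x : R, φ x = χ (r * x)

/-- The socle of `R` as a left module over itself: the sum of all minimal
(i.e. atomic) left submodules. -/
def socle (R : Type*) [Ring R] : Submodule R R :=
  sSup {I : Submodule R R | IsAtom I}

section LocalRing

variable {R : Type*} [Ring R] {m : Submodule R R}

theorem ker_toSpanSingleton_eq_of_isAtom (hm : m ≠ ⊤)
    (hmax : ∀ I : Submodule R R, I ≠ ⊤ → I ≤ m)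
    {I : Submodule R R} (hI : IsAtom I) {a : I} (ha : a ≠ 0) :
    LinearMap.ker (LinearMap.toSpanSingleton R I a) = m := by
  have := isSimpleModule_iff_isAtom.mpr hI
  have hker :=
    LinearMap.isCoatom_ker_of_surjective (IsSimpleModule.toSpanSingleton_surjective R ha)
  exact ((hker.le_iff.mp (hmax _ hker.1)).resolve_left hm).symm

theorem mul_eq_zero_of_mem_isAtom (hm : m ≠ ⊤) (hmax : ∀ I : Submodule R R, I ≠ ⊤ → I ≤ m)
    {I : Submodule R R} (hI : IsAtom I) {a x : R} (ha : a ∈ I) (hx : x ∈ m) : x * a = 0 := by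
  by_cases ha0 : a = 0
  · rw [ha0, mul_zero]
  rw [← ker_toSpanSingleton_eq_of_isAtom hm hmax hI (a := ⟨a, ha⟩) (by simpa using ha0)] at hx
  simpa [Subtype.ext_iff] using hx

theorem card_eq_card_quotient_of_isAtom (hm : m ≠ ⊤)
    (hmax : ∀ I : Submodule R R, I ≠ ⊤ → I ≤ m) {I : Submodule R R} (hI : IsAtom I) :
    Nat.card I = Nat.card (R ⧸ m) := by
  have := isSimpleModule_iff_isAtom.mpr hI
  have := IsSimpleModule.nontrivial R I
  obtain ⟨a, ha⟩ := exists_ne (0 : I)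
  rw [← ker_toSpanSingleton_eq_of_isAtom hm hmax hI ha]
  exact Nat.card_congr (LinearMap.quotKerEquivOfSurjective _
    (IsSimpleModule.toSpanSingleton_surjective R ha)).toEquiv.symm

end LocalRing

theorem socle_eq_of_isAtom {R : Type*} [Ring R]
    (huniq : ∀ I J : Submodule R R, IsAtom I → IsAtom J → I = J) {S : Submodule R R}
    (hS : IsAtom S) : socle R = S :=
  le_antisymm (sSup_le fun I hI => (huniq I S hI hS).le) (le_sSup hS)

theorem socle_le_of_ne_bot {R : Type*} [Ring R] [Finite R]
    (huniq : ∀ I J : Submodule R R, IsAtom I → IsAtom J → I = J) {N : Submodule R R}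
    (hN : N ≠ ⊥) : socle R ≤ N := by
  obtain ⟨S, hS, hSN⟩ := (eq_bot_or_exists_atom_le N).resolve_left hN
  exact (socle_eq_of_isAtom huniq hS).le.trans hSN

theorem AddChar.card_le_card_quotient_of_injective {G X : Type*} [AddCommGroup G] [Finite G]
    (H : AddSubgroup G) {ψ : X → AddChar G ℂ} (hψ : Function.Injective ψ)
    (hH : ∀ x, ∀ h ∈ H, ψ x h = 1) : Nat.card X ≤ Nat.card (G ⧸ H) := by
  have : Fintype (G ⧸ H) := Fintype.ofFinite _
  let lift (x : X) : AddChar (G ⧸ H) ℂ := toAddMonoidHomEquiv.symm <|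
    QuotientAddGroup.lift H (ψ x).toAddMonoidHom fun h hh => hH x h hh
  have hlift : Function.Injective lift := fun x y hxy =>
    hψ <| DFunLike.ext _ _ fun g : G => DFunLike.congr_fun hxy (g : G ⧸ H)
  calc Nat.card X ≤ Nat.card (AddChar (G ⧸ H) ℂ) := Nat.card_le_card_of_injective lift hlift
    _ = Nat.card (G ⧸ H) := by simp only [Nat.card_eq_fintype_card, AddChar.card_eq]

namespace IsFrobeniusRing

variable {R : Type*} [Ring R] [Fintype R]

theorem exists_addChar_mul_ne_one (hF : IsFrobeniusRing R) :
    ∃ χ : AddChar R ℂ, ∀ a : R, a ≠ 0 → ∃ r, χ (r * a) ≠ 1 := by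
  obtain ⟨χ, hχ⟩ := hF
  refine ⟨χ, fun a ha => ?_⟩
  obtain ⟨ψ, hψ⟩ := AddChar.exists_apply_ne_zero.2 ha
  obtain ⟨r, hr⟩ := hχ ψ
  exact ⟨r, hr a ▸ hψ⟩

theorem card_rightAnnihilator_le (hF : IsFrobeniusRing R) (m : Submodule R R) :
    Nat.card {c : R | ∀ x ∈ m, x * c = 0} ≤ Nat.card (R ⧸ m) := by
  obtain ⟨χ, hχ⟩ := hF.exists_addChar_mul_ne_one
  refine AddChar.card_le_card_quotient_of_injective m.toAddSubgroup
    (ψ := fun c => χ.compAddMonoidHom (AddMonoidHom.mulRight c.1)) ?_ ?_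
  · intro c d hcd
    by_contra hne
    obtain ⟨r, hr⟩ := hχ (c.1 - d.1) (sub_ne_zero.2 fun h => hne (Subtype.ext h))
    have := DFunLike.congr_fun hcd r
    simp only [AddChar.compAddMonoidHom_apply, AddMonoidHom.coe_mulRight] at this
    rw [mul_sub, AddChar.map_sub_eq_div, this, div_self (χ.val_isUnit _).ne_zero] at hr
    exact hr rfl
  · rintro ⟨c, hc⟩ x hx
    simp [hc x hx]

variable {m : Submodule R R}

theorem coe_eq_rightAnnihilator_of_isAtom (hF : IsFrobeniusRing R) (hm : m ≠ ⊤)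
    (hmax : ∀ I : Submodule R R, I ≠ ⊤ → I ≤ m) {I : Submodule R R} (hI : IsAtom I) :
    (I : Set R) = {c : R | ∀ x ∈ m, x * c = 0} := by
  refine Set.eq_of_subset_of_ncard_le
    (fun c hc x hx => mul_eq_zero_of_mem_isAtom hm hmax hI hc hx) ?_ (Set.toFinite _)
  rw [← Nat.card_coe_set_eq, ← Nat.card_coe_set_eq]
  exact (hF.card_rightAnnihilator_le m).trans (card_eq_card_quotient_of_isAtom hm hmax hI).ge

theorem isAtom_unique (hF : IsFrobeniusRing R) (hm : m ≠ ⊤)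
    (hmax : ∀ I : Submodule R R, I ≠ ⊤ → I ≤ m) (I J : Submodule R R) (hI : IsAtom I)
    (hJ : IsAtom J) : I = J :=
  SetLike.coe_injective <| (hF.coe_eq_rightAnnihilator_of_isAtom hm hmax hI).trans
    (hF.coe_eq_rightAnnihilator_of_isAtom hm hmax hJ).symm

end IsFrobeniusRing

open scoped Classical in
theorem isHomWeight_of_le_span {R : Type*} [Ring R] [Fintype R] (S : Submodule R R) (q : ℕ)
    (hS : ∀ x : R, x ≠ 0 → S ≤ Submodule.span R {x}) (hcard : Nat.card S = q) :
    IsHomWeight R (fun x => if x = 0 then 0 else if x ∈ S then (q : ℝ) else (q : ℝ) - 1)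
      ((q : ℝ) - 1) := by
  refine ⟨if_pos rfl, fun x y hxy => ?_, fun x hx => ?_⟩
  · simp only [← Submodule.span_singleton_eq_bot (R := R), ← Submodule.span_singleton_le_iff_mem,
      hxy]
  · set N := Submodule.span R {x}
    have hw : ∀ y : R, (if y = 0 then 0 else if y ∈ S then (q : ℝ) else (q : ℝ) - 1) =
        ((q : ℝ) - 1) + (if y ∈ S then 1 else 0) - (if y = 0 then (q : ℝ) else 0) := by
      intro y
      by_cases hy : y = 0
      · simp [hy]
      · split_ifs <;> ring
    have hSN : {y ∈ (N : Set R).toFinset | y ∈ S} = (S : Set R).toFinset := by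
      ext y
      simpa using fun hy => hS x hx hy
    have hcardS : (S : Set R).toFinset.card = q := hcard ▸ (Nat.card_eq_card_toFinset _).symm
    change _ = _ * (Nat.card (N : Set R) : ℝ)
    rw [finsum_mem_eq_toFinset_sum, Finset.sum_congr rfl fun y _ => hw y, Finset.sum_sub_distrib,
      Finset.sum_add_distrib, Finset.sum_const, Finset.sum_boole, hSN, hcardS, Finset.sum_ite_eq',
      if_pos (by simp), nsmul_eq_mul, Nat.card_eq_card_toFinset]
    ring

open scoped Classical in
/-- Let `R` be a finite local Frobenius ring, with unique maximal left ideal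
`m` and residue field `R/m` of cardinality `q`. Then the function with value `0` at `0`,
`q` on the nonzero elements of `soc(R)`, and `q − 1` elsewhere is a homogeneous weight on
`R` with average value `γ = q − 1`. -/
theorem stmt5 (R : Type*) [Ring R] [Fintype R] (hF : IsFrobeniusRing R)
    (m : Submodule R R) (hm : IsCoatom m) (hmax : ∀ I : Submodule R R, I ≠ ⊤ → I ≤ m)
    (q : ℕ) (hq : q = Nat.card (R ⧸ m)) :
    IsHomWeight R
      (fun x => if x = 0 then 0 else if x ∈ socle R then (q : ℝ) else (q : ℝ) - 1)
      ((q : ℝ) - 1) := by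
  have huniq := hF.isAtom_unique hm.1 hmax
  obtain ⟨S, hS, -⟩ := (eq_bot_or_exists_atom_le (⊤ : Submodule R R)).resolve_left
    (bot_le.trans_lt hm.1.lt_top).ne'
  refine isHomWeight_of_le_span (socle R) q
    (fun x hx => socle_le_of_ne_bot huniq (Submodule.span_singleton_eq_bot.not.mpr hx)) ?_
  rw [socle_eq_of_isAtom huniq hS, hq]
  exact card_eq_card_quotient_of_isAtom hm.1 hmax hS
end

section
/- Let R be a finite Frobenius ring with generating character χ and homogeneous weight w of average value γ, and let C ≤ R^n be a left linear code. Let D be the |C| × |C| distance matrix with D_{a,b} = w(a − b), and let χ_B be the |C| × (|R^×| n) complex matrix with entries (χ_B)_{c,(i,λ)} = χ(c_i λ). Then χ_B χ_B* = |R^×|(nJ − (1/γ)D), where J is the all-ones matrix and χ_B* the conjugate transpose. -/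
/-! Entrywise, `χ(a_i λ) conj χ(b_i λ) = χ((a - b)_i λ)`, and the character formula for `w`
turns each sum `∑_λ χ(x λ)` into `|R^×| (1 - w(x)/γ)`; summing over the `n` coordinates gives
`|R^×| (n - w(a - b)/γ)`. -/

lemma AddChar.mul_star_eq_sub {G K : Type*} [AddCommGroup G] [Finite G] [RCLike K]
    (ψ : AddChar G K) (a b : G) : ψ a * star (ψ b) = ψ (a - b) := by
  rw [← starRingEnd_apply, ← AddChar.map_neg_eq_conj, ← AddChar.map_add_eq_mul,
    sub_eq_add_neg]

lemma sum_units_eq_of_homogeneous_weight {R : Type*} [Ring R] [Fintype R] [DecidableEq R]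
    (χ : AddChar R ℂ) {γ : ℝ} (hγ : γ ≠ 0) {w : R → ℝ}
    (hw : ∀ x : R, (w x : ℂ)
      = (γ : ℂ) * (1 - (1 / (Fintype.card Rˣ : ℂ)) * ∑ u : Rˣ, χ (x * u))) (x : R) :
    ∑ u : Rˣ, χ (x * u) = Fintype.card Rˣ * (1 - w x / γ) := by
  have hcard : (Fintype.card Rˣ : ℂ) ≠ 0 := by simp
  have hγ' : (γ : ℂ) ≠ 0 := by exact_mod_cast hγ
  rw [hw]
  field_simp
  ring

lemma charMatrix_mul_conjTranspose_apply {R : Type*} [Ring R] [Fintype R] [DecidableEq R]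
    (χ : AddChar R ℂ) {n : ℕ} (C : Submodule R (Fin n → R)) (a b : C) :
    ((Matrix.of fun (c : C) (p : Fin n × Rˣ) => χ ((c : Fin n → R) p.1 * (p.2 : R))) *
      (Matrix.of fun (c : C) (p : Fin n × Rˣ) =>
        χ ((c : Fin n → R) p.1 * (p.2 : R))).conjTranspose) a b
    = ∑ i : Fin n, ∑ u : Rˣ, χ ((((a : Fin n → R) - b) i) * u) := by
  simp only [Matrix.mul_apply, Matrix.conjTranspose_apply, Matrix.of_apply,
    AddChar.mul_star_eq_sub, ← sub_mul, Fintype.sum_prod_type]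
  rfl

theorem stmt9_general (R : Type*) [Ring R] [Fintype R] [DecidableEq R]
    (χ : AddChar R ℂ)
    (γ : ℝ) (hγ : γ ≠ 0) (w : R → ℝ)
    (hw : ∀ x : R, (w x : ℂ)
      = (γ : ℂ) * (1 - (1 / (Fintype.card Rˣ : ℂ)) * ∑ u : Rˣ, χ (x * u)))
    (n : ℕ) (C : Submodule R (Fin n → R)) :
    (Matrix.of fun (c : ↥C) (p : Fin n × Rˣ) => χ ((c : Fin n → R) p.1 * (p.2 : R))) *
      (Matrix.of fun (c : ↥C) (p : Fin n × Rˣ) =>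
        χ ((c : Fin n → R) p.1 * (p.2 : R))).conjTranspose
    = (Fintype.card Rˣ : ℂ) •
        ((n : ℂ) • (Matrix.of fun (_ _ : ↥C) => (1 : ℂ)) -
         (1 / (γ : ℂ)) • Matrix.of fun (a b : ↥C) =>
            ((∑ i : Fin n, w (((a : Fin n → R) - (b : Fin n → R)) i) : ℝ) : ℂ)) := by
  ext a b
  rw [charMatrix_mul_conjTranspose_apply]
  simp only [sum_units_eq_of_homogeneous_weight χ hγ hw, Matrix.smul_apply, Matrix.sub_apply,
    Matrix.of_apply, smul_eq_mul, ← Finset.mul_sum, Finset.sum_sub_distrib, Finset.sum_const,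
    Finset.card_univ, Fintype.card_fin, nsmul_eq_mul, Complex.ofReal_sum, ← Finset.sum_div]
  ring

/-- Let `R` be a finite Frobenius ring with generating character `χ` and
homogeneous weight `w` of average value `γ` (given by the character formula), and let
`C ≤ R^n` be a left linear code.  With `χ_B` the `|C| × (|R^×|n)` matrix with entries
`χ(c_i λ)` and `D` the distance matrix `D_{a,b} = w(a−b)`, we have
`χ_B χ_B* = |R^×| (n J − (1/γ) D)`. -/
theorem stmt9 (R : Type*) [Ring R] [Fintype R] [DecidableEq R]
    (χ : AddChar R ℂ) (hχ : IsGeneratingChar R χ)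
    (γ : ℝ) (hγ : γ ≠ 0) (w : R → ℝ)
    (hw : ∀ x : R, (w x : ℂ)
      = (γ : ℂ) * (1 - (1 / (Fintype.card Rˣ : ℂ)) * ∑ u : Rˣ, χ (x * u)))
    (n : ℕ) (C : Submodule R (Fin n → R)) :
    (Matrix.of fun (c : ↥C) (p : Fin n × Rˣ) => χ ((c : Fin n → R) p.1 * (p.2 : R))) *
      (Matrix.of fun (c : ↥C) (p : Fin n × Rˣ) =>
        χ ((c : Fin n → R) p.1 * (p.2 : R))).conjTranspose
    = (Fintype.card Rˣ : ℂ) •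
        ((n : ℂ) • (Matrix.of fun (_ _ : ↥C) => (1 : ℂ)) -
         (1 / (γ : ℂ)) • Matrix.of fun (a b : ↥C) =>
            ((∑ i : Fin n, w (((a : Fin n → R) - (b : Fin n → R)) i) : ℝ) : ℂ)) :=
  stmt9_general R χ γ hγ w hw n C
end

section
/- Let C be a proper, regular, projective two-weight code over a finite Frobenius ring R with nonzero homogeneous weights w₁ < w₂ (average value γ), and suppose the Cayley graph Γ(C) on the weight-w₁ words is strongly regular with valency k and restricted eigenvalues ρ₁ < ρ₂. Then: (i) (w₂−w₁)k = w₂(|C|−1) − γn|C|; (ii) (w₂−w₁)ρ₁ = −w₂; (iii) (w₂−w₁)ρ₂ = −w₂ + γ|C|/|R^×|. -/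
/-- The homogeneous weight extended additively to `R^n`. -/
def wN {R : Type*} [Ring R] (w : R → ℝ) {n : ℕ} (c : Fin n → R) : ℝ :=
  ∑ i, w (c i)

open Finset
open scoped Classical Matrix

namespace TwoWeightCode

section Mobius

variable {α M : Type*} [Fintype α] [AddCommGroup M] (I : α → Finset α)
  (mem_self : ∀ a, a ∈ I a) (subset_of_mem : ∀ {a b}, b ∈ I a → I b ⊆ I a)

include mem_self subset_of_mem in
/-- `I a` is the disjoint union of the classes of its elements, and by induction the classes
strictly below `I a` contribute nothing. -/
theorem sum_class_eq_zero {H : α → M} (hH : ∀ a, ∑ b ∈ I a, H b = 0) (a : α) :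
    ∑ b with I b = I a, H b = 0 := by
  induction hn : #(I a) using Nat.strong_induction_on generalizing a with
  | _ n ih =>
    have hclass : ({b | I b = I a} : Finset α) = {b ∈ I a | I b = I a} := by
      ext b
      simp only [mem_filter, mem_univ, true_and, iff_and_self]
      exact fun h => h ▸ mem_self b
    have hsmaller : ∑ b ∈ I a with I b ≠ I a, H b = 0 := by
      rw [← sum_image' (g := I) (f := fun _ => (0 : M)) H, sum_const_zero]
      intro c hc
      simp only [mem_filter] at hc
      have hlt : #(I c) < n :=
        hn ▸ card_lt_card (ssubset_of_subset_of_ne (subset_of_mem hc.1) hc.2)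
      rw [← ih _ hlt c rfl]
      congr 1
      ext b
      simp only [mem_filter, mem_univ, true_and]
      constructor
      · exact fun h => ⟨⟨subset_of_mem hc.1 (h ▸ mem_self b), h ▸ hc.2⟩, h⟩
      · exact fun h => h.2
    rw [hclass, ← hH a, ← sum_filter_add_sum_filter_not (I a) (fun b => I b = I a), hsmaller,
      add_zero]

include mem_self subset_of_mem in
theorem sum_class_eq_of_sum_eq {F G : α → M} (h : ∀ a, ∑ b ∈ I a, F b = ∑ b ∈ I a, G b)
    (a : α) : ∑ b with I b = I a, F b = ∑ b with I b = I a, G b := by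
  rw [← sub_eq_zero, ← sum_sub_distrib]
  exact sum_class_eq_zero I mem_self subset_of_mem (fun a => by rw [sum_sub_distrib, h, sub_self]) a

include mem_self subset_of_mem in
theorem eq_of_sum_eq [NoZeroSMulDivisors ℕ M] {F G : α → M}
    (hF : ∀ a b, I a = I b → F a = F b) (hG : ∀ a b, I a = I b → G a = G b)
    (h : ∀ a, ∑ b ∈ I a, F b = ∑ b ∈ I a, G b) : F = G := by
  funext a
  have hsum := sum_class_eq_of_sum_eq I mem_self subset_of_mem h a
  rw [sum_congr rfl fun b hb => hF b a (mem_filter.mp hb).2,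
    sum_congr rfl fun b hb => hG b a (mem_filter.mp hb).2, sum_const, sum_const] at hsum
  exact smul_right_injective M (card_ne_zero_of_mem (s := {b | I b = I a}) (a := a) (by simp)) hsum

end Mobius

theorem sum_comp_addMonoidHom {G H M : Type*} [AddGroup G] [Fintype G] [AddMonoid H]
    [AddCommMonoid M] (φ : G →+ H) (f : H → M) :
    ∑ g, f (φ g) = #{g | φ g = 0} • ∑ h ∈ univ.image φ, f h := by
  rw [sum_comp, smul_sum]
  refine sum_congr rfl fun h hh => ?_
  obtain ⟨g, -, rfl⟩ := mem_image.mp hh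
  rw [AddMonoidHom.card_fiber_eq_of_mem_range φ ⟨g, rfl⟩ ⟨0, map_zero φ⟩]

theorem sum_image_addChar_eq_ite {G H : Type*} [AddGroup G] [Fintype G] [AddGroup H]
    (φ : G →+ H) (ψ : AddChar H ℂ) :
    ∑ h ∈ univ.image φ, ψ h
      = if ψ.compAddMonoidHom φ = 0 then (#(univ.image φ) : ℂ) else 0 := by
  split_ifs with hψ
  · rw [sum_congr rfl fun h hh => ?_, sum_const, nsmul_one]
    obtain ⟨g, -, rfl⟩ := mem_image.mp hh
    exact AddChar.eq_zero_iff.mp hψ g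
  · have h := AddChar.sum_eq_zero_iff_ne_zero.mpr hψ
    simp only [AddChar.compAddMonoidHom_apply] at h
    rw [sum_comp_addMonoidHom, smul_eq_zero] at h
    exact h.resolve_left (card_ne_zero_of_mem (s := {g | φ g = 0}) (a := 0) (by simp))

section PrincipalIdeal

variable {R : Type*} [Ring R] [Fintype R]

noncomputable def rightIdeal (r : R) : Finset R := univ.image (r * ·)

noncomputable def leftIdeal (x : R) : Finset R := univ.image (· * x)

theorem mem_rightIdeal {r s : R} : s ∈ rightIdeal r ↔ ∃ t, r * t = s := by
  simp [rightIdeal]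

theorem mem_leftIdeal {x y : R} : y ∈ leftIdeal x ↔ ∃ a, a * x = y := by
  simp [leftIdeal]

theorem self_mem_rightIdeal (r : R) : r ∈ rightIdeal r := mem_rightIdeal.mpr ⟨1, mul_one r⟩

theorem self_mem_leftIdeal (x : R) : x ∈ leftIdeal x := mem_leftIdeal.mpr ⟨1, one_mul x⟩

theorem rightIdeal_subset_of_mem {r s : R} (h : s ∈ rightIdeal r) :
    rightIdeal s ⊆ rightIdeal r := by
  obtain ⟨t, rfl⟩ := mem_rightIdeal.mp h
  intro z hz
  obtain ⟨t', rfl⟩ := mem_rightIdeal.mp hz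
  exact mem_rightIdeal.mpr ⟨t * t', (mul_assoc ..).symm⟩

theorem leftIdeal_subset_of_mem {x y : R} (h : y ∈ leftIdeal x) :
    leftIdeal y ⊆ leftIdeal x := by
  obtain ⟨a, rfl⟩ := mem_leftIdeal.mp h
  intro z hz
  obtain ⟨a', rfl⟩ := mem_leftIdeal.mp hz
  exact mem_leftIdeal.mpr ⟨a' * a, mul_assoc ..⟩

theorem coe_leftIdeal (x : R) : (leftIdeal x : Set R) = Submodule.span R {x} := by
  ext y
  simp [leftIdeal, Submodule.mem_span_singleton]

theorem leftIdeal_eq_iff {x y : R} :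
    leftIdeal x = leftIdeal y ↔ Submodule.span R {x} = Submodule.span R {y} := by
  rw [← coe_inj, coe_leftIdeal, coe_leftIdeal, SetLike.coe_set_eq]

theorem leftIdeal_zero : leftIdeal (0 : R) = {0} := by
  ext y
  simp [mem_leftIdeal, eq_comm]

theorem rightIdeal_eq_rightIdeal_one_iff {s : R} : rightIdeal s = rightIdeal 1 ↔ IsUnit s := by
  constructor
  · intro h
    obtain ⟨t, ht⟩ := mem_rightIdeal.mp (h ▸ self_mem_rightIdeal 1)
    exact IsUnit.of_mul_eq_one t ht
  · rintro ⟨u, rfl⟩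
    exact (rightIdeal_subset_of_mem (mem_rightIdeal.mpr ⟨(u : R), one_mul _⟩)).antisymm
      (rightIdeal_subset_of_mem (mem_rightIdeal.mpr ⟨↑u⁻¹, u.mul_inv⟩))

theorem sum_rightIdeal_addChar (χ : AddChar R ℂ) (r x : R) :
    ∑ s ∈ rightIdeal r, χ (s * x)
      = if ∀ t, χ (r * t * x) = 1 then (#(rightIdeal r) : ℂ) else 0 := by
  have h := sum_image_addChar_eq_ite (AddMonoidHom.mulLeft r)
    (χ.compAddMonoidHom (AddMonoidHom.mulRight x))
  simp only [AddChar.eq_zero_iff, AddChar.compAddMonoidHom_apply, AddMonoidHom.coe_mulLeft,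
    AddMonoidHom.coe_mulRight] at h
  exact h

theorem sum_leftIdeal_addChar_eq_zero (χ : AddChar R ℂ) {x u : R}
    (h : ∃ a, χ (a * x * u) ≠ 1) :
    ∑ y ∈ leftIdeal x, χ (y * u) = 0 := by
  have h' := sum_image_addChar_eq_ite (AddMonoidHom.mulRight x)
    (χ.compAddMonoidHom (AddMonoidHom.mulRight u))
  simp only [AddChar.eq_zero_iff, AddChar.compAddMonoidHom_apply, AddMonoidHom.coe_mulRight] at h'
  rw [leftIdeal, h', if_neg (by simpa using h)]

end PrincipalIdeal

section GeneratingCharacter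

variable {R : Type*} [Ring R]

def IsGeneratingChar (χ : AddChar R ℂ) : Prop :=
  ∀ φ : AddChar R ℂ, ∃ r : R, ∀ x : R, φ x = χ (r * x)

def mulShiftRight (ψ : AddChar R ℂ) (r : R) : AddChar R ℂ :=
  ψ.compAddMonoidHom (AddMonoidHom.mulRight r)

@[simp] theorem mulShiftRight_apply (ψ : AddChar R ℂ) (r x : R) :
    mulShiftRight ψ r x = ψ (x * r) :=
  rfl

variable [Fintype R] {χ : AddChar R ℂ} (hχ : IsGeneratingChar χ)
include hχ

theorem eq_zero_of_forall_addChar_mul_eq_one {z : R} (hz : ∀ x, χ (x * z) = 1) : z = 0 := by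
  by_contra hne
  obtain ⟨φ, hφ⟩ := AddChar.exists_apply_ne_zero.mpr hne
  obtain ⟨r, hr⟩ := hχ φ
  exact hφ ((hr z).trans (hz r))

theorem bijective_mulShift : Function.Bijective χ.mulShift := by
  refine (Fintype.bijective_iff_surjective_and_card _).mpr ⟨fun φ => ?_, AddChar.card_eq.symm⟩
  obtain ⟨r, hr⟩ := hχ φ
  exact ⟨r, by ext x; simp [hr x]⟩

theorem bijective_mulShiftRight : Function.Bijective (mulShiftRight χ) := by
  refine (Fintype.bijective_iff_injective_and_card _).mpr
    ⟨fun a b hab => ?_, AddChar.card_eq.symm⟩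
  rw [← sub_eq_zero]
  refine eq_zero_of_forall_addChar_mul_eq_one hχ fun x => ?_
  have hx : χ (x * a) = χ (x * b) := DFunLike.congr_fun hab x
  rw [mul_sub, sub_eq_add_neg, AddChar.map_add_eq_mul, hx, ← AddChar.map_add_eq_mul,
    add_neg_cancel, AddChar.map_zero_eq_one]

noncomputable def nakayama : R ≃* R where
  toEquiv := (Equiv.ofBijective _ (bijective_mulShift hχ)).trans
    (Equiv.ofBijective _ (bijective_mulShiftRight hχ)).symm
  map_mul' a b := by
    set ν := (Equiv.ofBijective _ (bijective_mulShiftRight hχ)).symm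
    have spec (c y : R) : χ (y * ν (χ.mulShift c)) = χ (c * y) :=
      DFunLike.congr_fun (Equiv.ofBijective_apply_symm_apply _ (bijective_mulShiftRight hχ) _) y
    apply (bijective_mulShiftRight hχ).injective
    ext x
    simp only [Equiv.toFun_as_coe, Equiv.trans_apply, Equiv.ofBijective_apply,
      mulShiftRight_apply]
    rw [spec, ← mul_assoc, spec, ← mul_assoc, spec, mul_assoc]

theorem addChar_mul_nakayama (a x : R) : χ (x * nakayama hχ a) = χ (a * x) := by
  have h := Equiv.ofBijective_apply_symm_apply _ (bijective_mulShiftRight hχ) (χ.mulShift a)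
  exact DFunLike.congr_fun h x

theorem sum_units_addChar_mul_comm (y : R) : ∑ u : Rˣ, χ (u * y) = ∑ u : Rˣ, χ (y * u) :=
  Fintype.sum_equiv (Units.mapEquiv (nakayama hχ)) _ _ fun u =>
    (addChar_mul_nakayama hχ u y).symm

end GeneratingCharacter

section HomogeneousWeight

variable {R : Type*} [Ring R] [Fintype R]

theorem sum_units_eq_sum_rightIdeal_eq_one {M : Type*} [AddCommMonoid M] (f : R → M) :
    ∑ u : Rˣ, f u = ∑ s with rightIdeal s = rightIdeal 1, f s := by
  simp_rw [rightIdeal_eq_rightIdeal_one_iff]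
  refine (sum_map univ ⟨Units.val, Units.val_injective⟩ f).symm.trans (congrArg₂ _ ?_ rfl)
  ext s
  rw [mem_filter]
  simp [IsUnit]

theorem sum_units_addChar_mul_eq_of_span_eq (χ : AddChar R ℂ) {x y : R}
    (h : Submodule.span R {x} = Submodule.span R {y}) :
    ∑ u : Rˣ, χ (u * x) = ∑ u : Rˣ, χ (u * y) := by
  have trivial_on_of_span_eq {x y : R} (h : Submodule.span R {x} = Submodule.span R {y}) (r : R)
      (hx : ∀ t, χ (r * t * x) = 1) (t : R) : χ (r * t * y) = 1 := by
    obtain ⟨a, rfl⟩ :=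
      Submodule.mem_span_singleton.mp (h ▸ Submodule.mem_span_singleton_self y)
    rw [smul_eq_mul, ← mul_assoc, mul_assoc r]
    exact hx _
  rw [sum_units_eq_sum_rightIdeal_eq_one (χ <| · * x),
    sum_units_eq_sum_rightIdeal_eq_one (χ <| · * y)]
  refine sum_class_eq_of_sum_eq rightIdeal self_mem_rightIdeal rightIdeal_subset_of_mem
    (fun r => ?_) 1
  rw [sum_rightIdeal_addChar, sum_rightIdeal_addChar]
  exact if_congr ⟨trivial_on_of_span_eq h r, trivial_on_of_span_eq h.symm r⟩ rfl rfl

theorem sum_leftIdeal_eq_of_isHomWeight {w : R → ℝ} {γ : ℝ} (hw : IsHomWeight R w γ) {x : R}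
    (hx : x ≠ 0) : ∑ y ∈ leftIdeal x, w y = γ * #(leftIdeal x) := by
  have h := hw.2.2 x hx
  rwa [← SetLike.coe_sort_coe, ← coe_leftIdeal, finsum_mem_coe_finset, Nat.card_coe_set_eq,
    Set.ncard_coe_finset] at h

noncomputable def unitSum (χ : AddChar R ℂ) (x : R) : ℂ := ∑ u : Rˣ, χ (x * u)

theorem unitSum_zero (χ : AddChar R ℂ) : unitSum χ 0 = Fintype.card Rˣ := by
  simp [unitSum]

end HomogeneousWeight

section Honold

variable {R : Type*} [Ring R] [Fintype R] {χ : AddChar R ℂ}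
  (hχ : IsGeneratingChar χ)
include hχ

theorem unitSum_eq_of_span_eq {x y : R} (h : Submodule.span R {x} = Submodule.span R {y}) :
    unitSum χ x = unitSum χ y := by
  simp only [unitSum, ← sum_units_addChar_mul_comm hχ]
  exact sum_units_addChar_mul_eq_of_span_eq χ h

theorem sum_leftIdeal_unitSum {x : R} (hx : x ≠ 0) : ∑ y ∈ leftIdeal x, unitSum χ y = 0 := by
  simp only [unitSum]
  rw [sum_comm]
  refine sum_eq_zero fun u _ => sum_leftIdeal_addChar_eq_zero χ ?_
  by_contra! h
  have hxu : x * u = 0 := eq_zero_of_forall_addChar_mul_eq_one hχ fun a => by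
    rw [← mul_assoc]; exact h a
  exact hx (by simpa using congrArg (· * ((u⁻¹ : Rˣ) : R)) hxu)

theorem mul_unitSum_eq_of_isHomWeight {w : R → ℝ} {γ : ℝ} (hw : IsHomWeight R w γ) (x : R) :
    γ * unitSum χ x = Fintype.card Rˣ * (γ - w x) := by
  refine congrFun (eq_of_sum_eq leftIdeal self_mem_leftIdeal leftIdeal_subset_of_mem
    (F := fun x => γ * unitSum χ x) (G := fun x => Fintype.card Rˣ * (γ - w x))
    (fun a b h => ?_) (fun a b h => ?_) (fun a => ?_)) x
  · simp only [unitSum_eq_of_span_eq hχ (leftIdeal_eq_iff.mp h)]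
  · simp only [hw.2.1 a b (leftIdeal_eq_iff.mp h)]
  rcases eq_or_ne a 0 with rfl | ha
  · simp [leftIdeal_zero, unitSum_zero, hw.1, mul_comm]
  · rw [← mul_sum, ← mul_sum, sum_leftIdeal_unitSum hχ ha, sum_sub_distrib, sum_const,
      ← Complex.ofReal_sum, sum_leftIdeal_eq_of_isHomWeight hw ha]
    push_cast
    ring

end Honold

theorem eq_zero_or_eq_of_mul_self_eq_smul {ι K : Type*} [Fintype ι] [Field K]
    {M : Matrix ι ι K} {c μ : K} (hM : M * M = c • M) {v : ι → K} (hv : v ≠ 0)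
    (hMv : M *ᵥ v = μ • v) : μ = 0 ∨ μ = c := by
  have hμ : μ * μ = c * μ := smul_left_injective K hv <|
    calc (μ * μ) • v = M *ᵥ (M *ᵥ v) := by rw [hMv, Matrix.mulVec_smul, hMv, mul_smul]
      _ = (c * μ) • v := by rw [Matrix.mulVec_mulVec, hM, Matrix.smul_mulVec, hMv, mul_smul]
  rcases mul_eq_zero.mp (by linear_combination hμ : μ * (μ - c) = 0) with h | h
  · exact .inl h
  · exact .inr (sub_eq_zero.mp h)

section Code

variable {R : Type*} [Ring R] {ℓ n : ℕ} {Y : Matrix (Fin ℓ) (Fin n) R}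

theorem eq_zero_of_forall_mul_eq_zero {j : Fin n}
    (hj : ∃ x : Fin ℓ → R, ∑ i, x i * Y i j = 1) {a : R} (h : ∀ i, Y i j * a = 0) :
    a = 0 := by
  obtain ⟨x, hx⟩ := hj
  rw [← one_mul a, ← hx, sum_mul]
  simp [mul_assoc, h]

theorem eq_of_forall_mul_units_eq
    (hproj : ∀ j j' : Fin n,
      (Set.range fun r : R => fun i => Y i j * r)
        = (Set.range fun r : R => fun i => Y i j' * r) → j = j')
    {j j' : Fin n} {u u' : Rˣ} (h : ∀ i, Y i j * u = Y i j' * u') : j = j' := by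
  have range_subset {j j' : Fin n} {u u' : Rˣ} (h : ∀ i, Y i j * u = Y i j' * u') :
      (Set.range fun r : R => fun i => Y i j * r)
        ⊆ Set.range fun r : R => fun i => Y i j' * r := by
    rintro _ ⟨r, rfl⟩
    exact ⟨u' * (u⁻¹ * r), funext fun i => by
      show Y i j' * _ = Y i j * r
      rw [← mul_assoc, ← h i, mul_assoc, u.mul_inv_cancel_left]⟩
  exact hproj j j' ((range_subset h).antisymm (range_subset fun i => (h i).symm))

variable (C : Submodule R (Fin n → R))

def dotChar (χ : AddChar R ℂ) (a : Fin n → R) : AddChar C ℂ :=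
  χ.compAddMonoidHom <| AddMonoidHom.mk' (fun d => ∑ j, (d : Fin n → R) j * a j) fun d e => by
    simp [add_mul, sum_add_distrib]

@[simp] theorem dotChar_apply (χ : AddChar R ℂ) (a : Fin n → R) (d : C) :
    dotChar C χ a d = χ (∑ j, (d : Fin n → R) j * a j) :=
  rfl

theorem addChar_mul_addChar_sub (χ : AddChar R ℂ) (d e : C) (p q : Fin n × Rˣ) :
    χ ((d : Fin n → R) p.1 * p.2) * χ (((e - d : C) : Fin n → R) q.1 * q.2)
      = χ ((e : Fin n → R) q.1 * q.2)
        * dotChar C χ (Pi.single p.1 ↑p.2 - Pi.single q.1 ↑q.2) d := by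
  simp only [dotChar_apply, Pi.sub_apply, mul_sub, Pi.single_apply, mul_ite, mul_zero,
    sum_sub_distrib, sum_ite_eq', mem_univ, if_true, Submodule.coe_sub, sub_mul]
  rw [← AddChar.map_add_eq_mul, ← AddChar.map_add_eq_mul]
  congr 1
  abel

variable [Fintype R]

noncomputable def codeUnitSum (χ : AddChar R ℂ) (d : Fin n → R) : ℂ :=
  ∑ j, unitSum χ (d j)

theorem codeUnitSum_eq_sum (χ : AddChar R ℂ) (d : Fin n → R) :
    codeUnitSum χ d = ∑ p : Fin n × Rˣ, χ (d p.1 * p.2) := by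
  rw [Fintype.sum_prod_type]
  rfl

noncomputable def codeUnitSumMatrix (χ : AddChar R ℂ) : Matrix C C ℂ :=
  Matrix.of fun a b => codeUnitSum χ ((a : Fin n → R) - (b : Fin n → R))

variable {C} {χ : AddChar R ℂ} (hχ : IsGeneratingChar χ) (hY : ∀ i, Y i ∈ C)
  (hreg : ∀ j, ∃ x : Fin ℓ → R, ∑ i, x i * Y i j = 1)
  (hproj : ∀ j j' : Fin n,
    (Set.range fun r : R => fun i => Y i j * r)
      = (Set.range fun r : R => fun i => Y i j' * r) → j = j')
include hχ

theorem mul_codeUnitSum_eq {w : R → ℝ} {γ : ℝ} (hw : IsHomWeight R w γ) (d : Fin n → R) :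
    γ * codeUnitSum χ d = Fintype.card Rˣ * (γ * n - wN w d) := by
  simp only [codeUnitSum, wN, mul_sum, mul_unitSum_eq_of_isHomWeight hχ hw, Complex.ofReal_sum]
  rw [← mul_sum, sum_sub_distrib, sum_const, card_univ, Fintype.card_fin, nsmul_eq_mul,
    mul_comm (n : ℂ)]

include hY in
theorem mulVec_eq_zero_of_dotChar_eq_zero {a : Fin n → R} (h : dotChar C χ a = 0) :
    Y *ᵥ a = 0 := by
  funext i
  refine eq_zero_of_forall_addChar_mul_eq_one hχ fun r => ?_
  have := AddChar.eq_zero_iff.mp h ⟨r • Y i, C.smul_mem r (hY i)⟩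
  simpa [Matrix.mulVec, dotProduct, mul_sum, mul_assoc] using this

include hY hreg hproj in
theorem dotChar_single_sub_single_eq_zero_iff {p q : Fin n × Rˣ} :
    dotChar C χ (Pi.single p.1 ↑p.2 - Pi.single q.1 ↑q.2) = 0 ↔ p = q := by
  refine ⟨fun h => ?_, fun h => by ext; simp [h]⟩
  have hcol (i : Fin ℓ) : Y i p.1 * p.2 = Y i q.1 * q.2 := by
    have := congrFun (mulVec_eq_zero_of_dotChar_eq_zero hχ hY h) i
    simpa [Matrix.mulVec_sub, sub_eq_zero] using this
  obtain ⟨j, u⟩ := p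
  obtain ⟨j', u'⟩ := q
  obtain rfl : j = j' := eq_of_forall_mul_units_eq hproj hcol
  have : (u : R) - u' = 0 := eq_zero_of_forall_mul_eq_zero (hreg j) fun i => by
    rw [mul_sub, hcol i, sub_self]
  rw [sub_eq_zero, Units.val_inj] at this
  rw [this]

variable [Fintype C]

include hY hreg hproj in
/-- Each term of the expanded product is a character of `C`, trivial only on the diagonal. -/
theorem sum_codeUnitSum_mul_sub (e : C) :
    ∑ d : C, codeUnitSum χ (d : Fin n → R) * codeUnitSum χ ((e - d : C) : Fin n → R)
      = Fintype.card C * codeUnitSum χ (e : Fin n → R) := by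
  calc ∑ d : C, codeUnitSum χ (d : Fin n → R) * codeUnitSum χ ((e - d : C) : Fin n → R)
      = ∑ p : Fin n × Rˣ, ∑ q : Fin n × Rˣ, ∑ d : C, χ ((e : Fin n → R) q.1 * q.2)
          * dotChar C χ (Pi.single p.1 ↑p.2 - Pi.single q.1 ↑q.2) d := by
        simp only [codeUnitSum_eq_sum, sum_mul_sum]
        simp only [addChar_mul_addChar_sub]
        rw [sum_comm]
        exact sum_congr rfl fun p _ => sum_comm
    _ = ∑ p : Fin n × Rˣ, χ ((e : Fin n → R) p.1 * p.2) * Fintype.card C := by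
        simp only [← mul_sum, AddChar.sum_eq_ite,
          dotChar_single_sub_single_eq_zero_iff hχ hY hreg hproj, mul_ite, mul_zero, sum_ite_eq,
          mem_univ, if_true]
    _ = Fintype.card C * codeUnitSum χ (e : Fin n → R) := by
        rw [codeUnitSum_eq_sum, mul_sum]
        simp only [mul_comm]

include hY hreg hproj in
theorem codeUnitSumMatrix_mul_self :
    codeUnitSumMatrix C χ * codeUnitSumMatrix C χ
      = (Fintype.card C : ℂ) • codeUnitSumMatrix C χ := by
  ext a b
  rw [Matrix.mul_apply, Matrix.smul_apply, codeUnitSumMatrix, Matrix.of_apply, smul_eq_mul,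
    ← Submodule.coe_sub, ← sum_codeUnitSum_mul_sub hχ hY hreg hproj (a - b)]
  refine Fintype.sum_equiv (Equiv.subLeft a) _ _ fun d => ?_
  simp only [Matrix.of_apply, Equiv.subLeft_apply, Submodule.coe_sub, sub_sub_sub_cancel_left]

include hY hreg in
theorem sum_codeUnitSum_eq_zero [Nontrivial R] :
    ∑ d : C, codeUnitSum χ (d : Fin n → R) = 0 := by
  have hchar (p : Fin n × Rˣ) : dotChar C χ (Pi.single p.1 ↑p.2) ≠ 0 := fun h =>
    p.2.ne_zero <| eq_zero_of_forall_mul_eq_zero (hreg p.1) fun i => by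
      simpa using congrFun (mulVec_eq_zero_of_dotChar_eq_zero hχ hY h) i
  simp only [codeUnitSum_eq_sum]
  rw [sum_comm]
  refine sum_eq_zero fun p _ => ?_
  simpa [Pi.single_apply] using AddChar.sum_eq_zero_iff_ne_zero.mpr (hchar p)

include hY hreg in
theorem sum_wN_eq [Nontrivial R] {w : R → ℝ} {γ : ℝ} (hw : IsHomWeight R w γ) :
    ∑ c : C, wN w (c : Fin n → R) = γ * n * Fintype.card C := by
  have h := congrArg ((γ : ℂ) * ·) (sum_codeUnitSum_eq_zero hχ hY hreg)
  simp only [mul_sum, mul_codeUnitSum_eq hχ hw, mul_zero] at h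
  rw [← mul_sum, mul_eq_zero, sum_sub_distrib, sum_const, card_univ, nsmul_eq_mul,
    ← Complex.ofReal_sum, sub_eq_zero] at h
  have h' := h.resolve_left (Nat.cast_ne_zero.mpr Fintype.card_ne_zero)
  exact_mod_cast (by rw [← h']; push_cast; ring :
    ((∑ c : C, wN w (c : Fin n → R) : ℝ) : ℂ) = ((γ * n * Fintype.card C : ℝ) : ℂ))

include hY hreg hproj in
theorem eq_zero_or_eq_of_sum_wN_sub_mul {w : R → ℝ} {γ : ℝ} (hw : IsHomWeight R w γ)
    (hγ : γ ≠ 0) {v : C → ℝ} (hv : v ≠ 0) (hv0 : ∑ c, v c = 0) {θ : ℝ}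
    (hDv : ∀ a : C, ∑ b : C, wN w ((a : Fin n → R) - (b : Fin n → R)) * v b = θ * v a) :
    θ = 0 ∨ θ = -(γ * Fintype.card C / Fintype.card Rˣ) := by
  have hU : (Fintype.card Rˣ : ℂ) ≠ 0 := Nat.cast_ne_zero.mpr Fintype.card_ne_zero
  have hγ' : (γ : ℂ) ≠ 0 := Complex.ofReal_ne_zero.mpr hγ
  set μ : ℂ := -(Fintype.card Rˣ * θ / γ)
  set vC : C → ℂ := fun c => v c
  have hvC : vC ≠ 0 := fun h => hv (funext fun c => by simpa [vC] using congrFun h c)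
  have hMv : codeUnitSumMatrix C χ *ᵥ vC = μ • vC := by
    funext a
    have hT (b : C) : codeUnitSum χ ((a : Fin n → R) - (b : Fin n → R))
        = Fintype.card Rˣ / γ * (γ * n - wN w ((a : Fin n → R) - (b : Fin n → R))) := by
      rw [div_mul_eq_mul_div, eq_div_iff hγ', mul_comm, mul_codeUnitSum_eq hχ hw]
    have hv0' : ∑ b, vC b = 0 := by simp only [vC]; exact_mod_cast hv0
    have hDv' :
        ∑ b : C, (wN w ((a : Fin n → R) - (b : Fin n → R)) : ℂ) * vC b = θ * vC a := by
      simp only [vC]; exact_mod_cast hDv a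
    calc (codeUnitSumMatrix C χ *ᵥ vC) a
        = Fintype.card Rˣ / γ * (γ * n * ∑ b, vC b
            - ∑ b : C, (wN w ((a : Fin n → R) - (b : Fin n → R)) : ℂ) * vC b) := by
          simp only [Matrix.mulVec, dotProduct, codeUnitSumMatrix, Matrix.of_apply, hT, mul_sum,
            ← sum_sub_distrib]
          exact sum_congr rfl fun b _ => by ring
      _ = (μ • vC) a := by
          rw [hv0', hDv', Pi.smul_apply, smul_eq_mul]
          ring
  rcases eq_zero_or_eq_of_mul_self_eq_smul (codeUnitSumMatrix_mul_self hχ hY hreg hproj) hvC hMv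
    with h | h
  · exact .inl <| by exact_mod_cast (by simpa [μ, hU, hγ'] using h : (θ : ℂ) = 0)
  · have hθ : (θ : ℂ) = -(γ * Fintype.card C / Fintype.card Rˣ) := by
      simp only [μ] at h
      field_simp at h ⊢
      linear_combination -h
    exact .inr (by exact_mod_cast hθ)

end Code

section TwoWeight

variable {R : Type*} [Ring R] {n : ℕ} {C : Submodule R (Fin n → R)} {w : R → ℝ}
  {w₁ w₂ : ℝ}

theorem wN_zero (hw0 : w 0 = 0) : wN w (0 : Fin n → R) = 0 := by
  simp [wN, hw0]

theorem wN_eq_or_eq (htw : {x : ℝ | ∃ c ∈ C, c ≠ 0 ∧ wN w c = x} = {w₁, w₂})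
    {c : Fin n → R} (hc : c ∈ C) (hc0 : c ≠ 0) : wN w c = w₁ ∨ wN w c = w₂ := by
  have : wN w c ∈ ({w₁, w₂} : Set ℝ) := htw ▸ ⟨c, hc, hc0, rfl⟩
  simpa using this

theorem exists_wN_eq_left (htw : {x : ℝ | ∃ c ∈ C, c ≠ 0 ∧ wN w c = x} = {w₁, w₂}) :
    ∃ c ∈ C, c ≠ 0 ∧ wN w c = w₁ := by
  have : w₁ ∈ {x : ℝ | ∃ c ∈ C, c ≠ 0 ∧ wN w c = x} := htw ▸ Set.mem_insert _ _
  exact this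

theorem sum_wN_pos [Fintype C] (hw0 : w 0 = 0) (hw₁ : 0 < w₁) (hw₁₂ : w₁ < w₂)
    (htw : {x : ℝ | ∃ c ∈ C, c ≠ 0 ∧ wN w c = x} = {w₁, w₂}) :
    0 < ∑ c : C, wN w (c : Fin n → R) := by
  obtain ⟨c₀, hc₀, -, hc₀w⟩ := exists_wN_eq_left htw
  refine sum_pos' (fun c _ => ?_) ⟨⟨c₀, hc₀⟩, mem_univ _, hc₀w ▸ hw₁⟩
  rcases eq_or_ne (c : Fin n → R) 0 with h | h
  · rw [h, wN_zero hw0]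
  · rcases wN_eq_or_eq htw c.2 h with h | h <;> linarith

variable {A : Matrix C C ℝ} (hw0 : w 0 = 0) (hw₁ : w₁ ≠ 0) (hw₁₂ : w₁ ≠ w₂)
  (htw : {x : ℝ | ∃ c ∈ C, c ≠ 0 ∧ wN w c = x} = {w₁, w₂})
  (hA : ∀ a b : C, A a b = if wN w ((a : Fin n → R) - (b : Fin n → R)) = w₁ then 1 else 0)
include hw0 hw₁ hw₁₂ htw hA

theorem wN_sub_eq (a b : C) :
    wN w ((a : Fin n → R) - (b : Fin n → R))
      = w₂ - (if a = b then w₂ else 0) - (w₂ - w₁) * A a b := by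
  rw [hA]
  rcases eq_or_ne a b with rfl | hab
  · simp [wN_zero hw0, hw₁.symm]
  · have hne : (a : Fin n → R) - b ≠ 0 := sub_ne_zero.mpr (Subtype.coe_injective.ne hab)
    rcases wN_eq_or_eq htw (sub_mem a.2 b.2) hne with h | h
    · simp [h, hab]
    · simp [h, hab, hw₁₂.symm]

variable [Fintype C]

theorem sum_wN_sub_mul (v : C → ℝ) (a : C) :
    ∑ b : C, wN w ((a : Fin n → R) - (b : Fin n → R)) * v b
      = w₂ * ∑ b, v b - w₂ * v a - (w₂ - w₁) * (A *ᵥ v) a := by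
  simp only [wN_sub_eq hw0 hw₁ hw₁₂ htw hA, sub_mul, sum_sub_distrib, ite_mul, zero_mul,
    sum_ite_eq, mem_univ, if_true, Matrix.mulVec, dotProduct, mul_sum, mul_assoc]

theorem sub_mul_eq_of_sum_eq {k : ℝ} (hk : ∀ a, ∑ b, A a b = k) :
    (w₂ - w₁) * k = w₂ * (Fintype.card C - 1) - ∑ c : C, wN w (c : Fin n → R) := by
  have h := sum_wN_sub_mul hw0 hw₁ hw₁₂ htw hA (fun _ => 1) 0
  have hneg : ∑ b : C, wN w (((0 : C) : Fin n → R) - (b : Fin n → R))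
      = ∑ b : C, wN w (b : Fin n → R) := by
    simpa using Equiv.sum_comp (Equiv.neg C) fun b : C => wN w (b : Fin n → R)
  have hk₀ : (A *ᵥ fun _ => 1) 0 = k := by simp [Matrix.mulVec, dotProduct, hk]
  simp only [mul_one, hneg, hk₀, sum_const, card_univ, nsmul_eq_mul] at h
  linarith

end TwoWeight

end TwoWeightCode

open TwoWeightCode

open scoped Classical in
theorem stmt12_general (R : Type*) [Ring R] [Fintype R]
    (hF : IsFrobeniusRing R) (w : R → ℝ) (γ : ℝ) (hw : IsHomWeight R w γ)
    (ℓ n : ℕ) (Y : Matrix (Fin ℓ) (Fin n) R)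
    (C : Submodule R (Fin n → R)) [Fintype ↥C]
    (hC : (C : Set (Fin n → R)) = Set.range fun x : Fin ℓ → R => fun j => ∑ i, x i * Y i j)
    (hreg : ∀ j : Fin n, ∀ r : R, ∃ x : Fin ℓ → R, ∑ i, x i * Y i j = r)
    (hproj : ∀ j j' : Fin n,
      (Set.range fun r : R => fun i => Y i j * r)
        = (Set.range fun r : R => fun i => Y i j' * r) → j = j')
    (w₁ w₂ : ℝ) (hw₁pos : 0 < w₁) (hw₁₂ : w₁ < w₂)
    (htw : {x : ℝ | ∃ c ∈ C, c ≠ 0 ∧ wN w c = x} = {w₁, w₂})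
    (A : Matrix ↥C ↥C ℝ)
    (hA : ∀ a b : ↥C, A a b = if wN w ((a : Fin n → R) - (b : Fin n → R)) = w₁ then 1 else 0)
    (k ρ₁ ρ₂ : ℝ)
    (hk : ∀ a : ↥C, ∑ b : ↥C, A a b = k)
    (hρ₁ : ∃ v : ↥C → ℝ, v ≠ 0 ∧ A.mulVec v = ρ₁ • v ∧ ∑ c : ↥C, v c = 0)
    (hρ₂ : ∃ v : ↥C → ℝ, v ≠ 0 ∧ A.mulVec v = ρ₂ • v ∧ ∑ c : ↥C, v c = 0)
    (hρ : ρ₁ < ρ₂) :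
    (w₂ - w₁) * k = w₂ * ((Nat.card ↥C : ℝ) - 1) - γ * n * (Nat.card ↥C : ℝ) ∧
    (w₂ - w₁) * ρ₁ = -w₂ ∧
    (w₂ - w₁) * ρ₂ = -w₂ + γ * (Nat.card ↥C : ℝ) / (Nat.card Rˣ : ℝ) := by
  obtain ⟨χ, hχ⟩ := hF
  have hY (i : Fin ℓ) : Y i ∈ C := by
    rw [← SetLike.mem_coe, hC]
    exact ⟨Pi.single i 1, by simp [Pi.single_apply]⟩
  have hreg₁ (j : Fin n) := hreg j 1
  obtain ⟨c₀, -, hc₀, -⟩ := exists_wN_eq_left htw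
  obtain ⟨j, hj⟩ := Function.ne_iff.mp hc₀
  have : Nontrivial R := nontrivial_of_ne _ _ hj
  have hsum := sum_wN_eq hχ hY hreg₁ hw
  have hγ : 0 < γ := pos_of_mul_pos_left (pos_of_mul_pos_left
    (hsum ▸ sum_wN_pos hw.1 hw₁pos hw₁₂ htw) (Nat.cast_nonneg _)) (Nat.cast_nonneg _)
  have heig {ρ : ℝ}
      (h : ∃ v : C → ℝ, v ≠ 0 ∧ A *ᵥ v = ρ • v ∧ ∑ c, v c = 0) :=
    let ⟨v, hv, hAv, hv0⟩ := h
    eq_zero_or_eq_of_sum_wN_sub_mul hχ hY hreg₁ hproj hw hγ.ne' hv hv0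
      (θ := -w₂ - (w₂ - w₁) * ρ) fun a => by
        simp [sum_wN_sub_mul hw.1 hw₁pos.ne' hw₁₂.ne htw hA, hAv, hv0]; ring
  have hc : 0 < γ * Fintype.card C / Fintype.card Rˣ := by positivity
  have hρ' := mul_lt_mul_of_pos_left hρ (sub_pos.mpr hw₁₂)
  rw [Nat.card_eq_fintype_card, Nat.card_eq_fintype_card,
    sub_mul_eq_of_sum_eq hw.1 hw₁pos.ne' hw₁₂.ne htw hA hk, hsum]
  rcases heig hρ₁ with h₁ | h₁ <;> rcases heig hρ₂ with h₂ | h₂ <;>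
    exact ⟨rfl, by linarith, by linarith⟩

open scoped Classical in
/-- Let `C ≤ R^n` be a proper, regular, projective two-weight code over a
finite Frobenius ring `R`, with nonzero homogeneous weights `w₁ < w₂` (average value `γ`).
If the Cayley graph `Γ(C)` (adjacency matrix `A`, connecting codewords at distance `w₁`)
has valency `k` and restricted eigenvalues `ρ₁ < ρ₂`, then
(i) `(w₂−w₁)k = w₂(|C|−1) − γn|C|`, (ii) `(w₂−w₁)ρ₁ = −w₂`, and
(iii) `(w₂−w₁)ρ₂ = −w₂ + γ|C|/|R^×|`. -/
theorem stmt12 (R : Type*) [Ring R] [Fintype R]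
    (hF : IsFrobeniusRing R) (w : R → ℝ) (γ : ℝ) (hw : IsHomWeight R w γ)
    (ℓ n : ℕ) (Y : Matrix (Fin ℓ) (Fin n) R)
    (C : Submodule R (Fin n → R)) [Fintype ↥C]
    (hC : (C : Set (Fin n → R)) = Set.range fun x : Fin ℓ → R => fun j => ∑ i, x i * Y i j)
    (hreg : ∀ j : Fin n, ∀ r : R, ∃ x : Fin ℓ → R, ∑ i, x i * Y i j = r)
    (hproj : ∀ j j' : Fin n,
      (Set.range fun r : R => fun i => Y i j * r)
        = (Set.range fun r : R => fun i => Y i j' * r) → j = j')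
    (hproper : ∀ c ∈ C, wN w c = 0 → c = 0)
    (w₁ w₂ : ℝ) (hw₁pos : 0 < w₁) (hw₁₂ : w₁ < w₂)
    (htw : {x : ℝ | ∃ c ∈ C, c ≠ 0 ∧ wN w c = x} = {w₁, w₂})
    (A : Matrix ↥C ↥C ℝ)
    (hA : ∀ a b : ↥C, A a b = if wN w ((a : Fin n → R) - (b : Fin n → R)) = w₁ then 1 else 0)
    (k ρ₁ ρ₂ : ℝ)
    (hk : ∀ a : ↥C, ∑ b : ↥C, A a b = k)
    (hρ₁ : ∃ v : ↥C → ℝ, v ≠ 0 ∧ A.mulVec v = ρ₁ • v ∧ ∑ c : ↥C, v c = 0)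
    (hρ₂ : ∃ v : ↥C → ℝ, v ≠ 0 ∧ A.mulVec v = ρ₂ • v ∧ ∑ c : ↥C, v c = 0)
    (hρ : ρ₁ < ρ₂) :
    (w₂ - w₁) * k = w₂ * ((Nat.card ↥C : ℝ) - 1) - γ * n * (Nat.card ↥C : ℝ) ∧
    (w₂ - w₁) * ρ₁ = -w₂ ∧
    (w₂ - w₁) * ρ₂ = -w₂ + γ * (Nat.card ↥C : ℝ) / (Nat.card Rˣ : ℝ) :=
  stmt12_general R hF w γ hw ℓ n Y C hC hreg hproj w₁ w₂ hw₁pos hw₁₂ htw A hA k ρ₁ ρ₂ hk hρ₁ hρ₂ hρ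
end

section
/- Let R be a finite Frobenius ring of order p^r (p prime) having a minimal right ideal of size p^s. Then p^s − 1 divides |R^×|. -/
def IsRightIdeal {R : Type*} [Ring R] (I : Set R) : Prop :=
  (0 : R) ∈ I ∧ (∀ a b : R, a ∈ I → b ∈ I → a + b ∈ I) ∧ ∀ a ∈ I, ∀ r : R, a * r ∈ I

open Function LinearMap Submodule IsModularLattice

theorem isCompl_of_inf_sup_eq {α : Type*} [Lattice α] [BoundedOrder α] {a b t : α}
    (hab : a ⊔ b = ⊤) (hd : Disjoint (a ⊓ b) t) (hs : a ⊓ b ⊔ t = b) : IsCompl a t := by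
  have htb : t ≤ b := hs ▸ le_sup_right
  refine ⟨disjoint_iff_inf_le.mpr ?_, codisjoint_iff_le_sup.mpr ?_⟩
  · calc a ⊓ t ≤ a ⊓ b ⊓ t := le_inf (inf_le_inf_left a htb) inf_le_right
      _ = ⊥ := hd.eq_bot
  · calc ⊤ = a ⊔ (a ⊓ b ⊔ t) := by rw [hs, hab]
      _ ≤ a ⊔ t := sup_le le_sup_left (sup_le (inf_le_left.trans le_sup_left) le_sup_right)

section SemisimpleModule

variable {R M S : Type*} [Ring R] [AddCommGroup M] [Module R M] [AddCommGroup S] [Module R S]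

noncomputable def Submodule.prodEquivOfDisjoint {p q : Submodule R M} (h : Disjoint p q) :
    (p × q) ≃ₗ[R] ↥(p ⊔ q) :=
  LinearEquiv.ofInjective (p.subtype.coprod q.subtype)
    (by rw [← ker_eq_bot, ker_coprod_of_disjoint_range, ker_subtype, ker_subtype, prod_bot]
        rwa [range_subtype, range_subtype]) ≪≫ₗ
    LinearEquiv.ofEq _ _ (by rw [range_coprod, range_subtype, range_subtype])

noncomputable def LinearMap.equivOfIsComplKer (f : M →ₗ[R] S) (hf : Surjective f)
    {C : Submodule R M} (h : IsCompl (ker f) C) : C ≃ₗ[R] S :=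
  (quotientEquivOfIsCompl _ C h).symm ≪≫ₗ f.quotKerEquivOfSurjective hf

@[simp]
theorem LinearMap.equivOfIsComplKer_apply (f : M →ₗ[R] S) (hf : Surjective f)
    {C : Submodule R M} (h : IsCompl (ker f) C) (c : C) : f.equivOfIsComplKer hf h c = f c :=
  rfl

variable [IsSemisimpleModule R M] [IsSimpleModule R S]

theorem LinearMap.nonempty_ker_linearEquiv_ker {f g : M →ₗ[R] S} (hf : Surjective f)
    (hg : Surjective g) : Nonempty (ker f ≃ₗ[R] ker g) := by
  by_cases heq : ker f = ker g
  · exact ⟨LinearEquiv.ofEq _ _ heq⟩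
  have hsup : ker f ⊔ ker g = ⊤ :=
    (isCoatom_ker_of_surjective hf).sup_eq_top_of_ne (isCoatom_ker_of_surjective hg) heq
  -- Each kernel is `ker f ⊓ ker g` plus a complement of the other kernel, a copy of `S`.
  obtain ⟨T, hKT, hT⟩ := exists_disjoint_and_sup_eq (inf_le_left : ker f ⊓ ker g ≤ ker f)
  obtain ⟨T', hKT', hT'⟩ := exists_disjoint_and_sup_eq (inf_le_right : ker f ⊓ ker g ≤ ker g)
  have hgT : IsCompl (ker g) T :=
    isCompl_of_inf_sup_eq (by rwa [sup_comm]) (by rwa [inf_comm]) (by rwa [inf_comm])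
  have hfT' : IsCompl (ker f) T' := isCompl_of_inf_sup_eq hsup hKT' hT'
  exact ⟨LinearEquiv.ofEq _ _ hT.symm ≪≫ₗ (prodEquivOfDisjoint hKT).symm ≪≫ₗ
    (LinearEquiv.refl R _).prodCongr
      (g.equivOfIsComplKer hg hgT ≪≫ₗ (f.equivOfIsComplKer hf hfT').symm) ≪≫ₗ
    prodEquivOfDisjoint hKT' ≪≫ₗ LinearEquiv.ofEq _ _ hT'⟩

theorem LinearMap.exists_linearEquiv_apply_eq_of_surjective {f g : M →ₗ[R] S} (hf : Surjective f)
    (hg : Surjective g) : ∃ φ : M ≃ₗ[R] M, ∀ m, f (φ m) = g m := by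
  obtain ⟨ψ⟩ := nonempty_ker_linearEquiv_ker hg hf
  obtain ⟨C, hC⟩ := exists_isCompl (ker f)
  obtain ⟨D, hD⟩ := exists_isCompl (ker g)
  refine ⟨(prodEquivOfIsCompl _ _ hD).symm ≪≫ₗ
    ψ.prodCongr (g.equivOfIsComplKer hg hD ≪≫ₗ (f.equivOfIsComplKer hf hC).symm) ≪≫ₗ
    prodEquivOfIsCompl _ _ hC, fun m => ?_⟩
  obtain ⟨n, d, rfl⟩ : ∃ (n : ker g) (d : D), (n : M) + d = m :=
    ⟨_, _, (prodEquivOfIsCompl _ _ hD).apply_symm_apply m⟩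
  simp [← equivOfIsComplKer_apply f hf hC]

end SemisimpleModule

theorem isUnit_of_sub_one_mem_jacobson {A : Type*} [Ring A] [IsDedekindFiniteMonoid A] {a : A}
    (h : a - 1 ∈ Ring.jacobson A) : IsUnit a := by
  rw [← Ideal.jacobson_bot, Ideal.mem_jacobson_iff] at h
  obtain ⟨z, hz⟩ := h 1
  exact IsUnit.of_mul_eq_one_right z (by simpa [mul_sub, sub_eq_zero] using hz)

section FiniteRing

variable {A S : Type*} [Ring A] [Finite A] [AddCommGroup S] [Module A S] [IsSimpleModule A S]

theorem exists_units_smul_eq_of_ne_zero {x y : S} (hx : x ≠ 0) (hy : y ≠ 0) :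
    ∃ u : Aˣ, u • x = y := by
  let J := Ring.jacobson A
  have : Finite (A ⧸ J) := Finite.of_surjective _ (Submodule.Quotient.mk_surjective J)
  have : IsSemisimpleModule A (A ⧸ J) :=
    (IsArtinian.isSemisimpleModule_iff_jacobson A _).mpr (Module.jacobson_quotient_jacobson A A)
  have hJ : J ≤ Module.annihilator A S := IsSemisimpleModule.jacobson_le_annihilator A S
  let π : S → (A ⧸ J) →ₗ[A] S := fun z => J.liftQ (toSpanSingleton A S z) fun a ha =>
    Module.mem_annihilator.mp (hJ ha) z
  have hπ : ∀ z a, π z (Submodule.Quotient.mk a) = a • z := fun _ _ => rfl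
  have hsurj : ∀ z : S, z ≠ 0 → Surjective (π z) := fun z hz w => by
    obtain ⟨a, rfl⟩ := mem_span_singleton.mp
      (IsSimpleModule.span_singleton_eq_top A hz ▸ mem_top : w ∈ A ∙ z)
    exact ⟨Submodule.Quotient.mk a, rfl⟩
  obtain ⟨φ, hφ⟩ := exists_linearEquiv_apply_eq_of_surjective (hsurj x hx) (hsurj y hy)
  obtain ⟨u, hu⟩ := Submodule.Quotient.mk_surjective J (φ (Submodule.Quotient.mk 1))
  have hφu : ∀ a : A, φ (Submodule.Quotient.mk a) = Submodule.Quotient.mk (a * u) := fun a => by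
    have : (Submodule.Quotient.mk a : A ⧸ J) = a • Submodule.Quotient.mk 1 := by
      rw [← Submodule.Quotient.mk_smul, smul_eq_mul, mul_one]
    rw [this, map_smul, ← hu]
    rfl
  obtain ⟨v, hv⟩ := Submodule.Quotient.mk_surjective J (φ.symm (Submodule.Quotient.mk 1))
  have hvu : IsUnit (v * u) := by
    apply isUnit_of_sub_one_mem_jacobson
    rw [← Submodule.Quotient.eq, ← hφu, hv, φ.apply_symm_apply]
  refine ⟨(isUnit_of_mul_isUnit_right hvu).unit, ?_⟩
  rw [Units.smul_def, IsUnit.unit_spec, ← hπ, hu, hφ, hπ, one_smul]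

theorem card_sub_one_dvd_card_units : Nat.card S - 1 ∣ Nat.card Aˣ := by
  have : Finite S := Module.finite_of_finite A
  have := IsSimpleModule.nontrivial A S
  obtain ⟨x, hx⟩ := exists_ne (0 : S)
  have horbit : MulAction.orbit Aˣ x = {0}ᶜ := Set.ext fun y =>
    ⟨fun ⟨u, hu⟩ => hu ▸ (smul_eq_zero_iff_eq u).not.mpr hx, exists_units_smul_eq_of_ne_zero hx⟩
  rw [← Set.ncard_singleton (0 : S), ← Set.ncard_compl, ← horbit,
    ← MulAction.index_stabilizer]
  exact Subgroup.index_dvd_card _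

end FiniteRing

section RightIdeal

variable {R : Type*} [Ring R]

def IsRightIdeal.toSubmodule {I : Set R} (hI : IsRightIdeal I) : Submodule Rᵐᵒᵖ R where
  carrier := I
  zero_mem' := hI.1
  add_mem' := hI.2.1 _ _
  smul_mem' r _ ha := hI.2.2 _ ha r.unop

theorem isRightIdeal_coe (J : Submodule Rᵐᵒᵖ R) : IsRightIdeal (J : Set R) :=
  ⟨J.zero_mem, fun _ _ => J.add_mem, fun _ ha r => J.smul_mem (MulOpposite.op r) ha⟩

theorem IsRightIdeal.isSimpleModule_toSubmodule {I : Set R} (hI : IsRightIdeal I)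
    (hne : I ≠ {0}) (hmin : ∀ J : Set R, IsRightIdeal J → J ⊆ I → J = {0} ∨ J = I) :
    IsSimpleModule Rᵐᵒᵖ hI.toSubmodule := by
  rw [isSimpleModule_iff_isAtom]
  refine ⟨fun h => hne (congrArg SetLike.coe h), fun J hJ => ?_⟩
  rcases hmin J (isRightIdeal_coe J) hJ.le with h | h
  · exact SetLike.coe_injective h
  · exact absurd (SetLike.coe_injective h) hJ.ne

end RightIdeal

theorem stmt16_general (R : Type*) [Ring R] [Fintype R] (p s : ℕ)
    (I : Set R) (hI : IsRightIdeal I) (hne : I ≠ {0})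
    (hmin : ∀ J : Set R, IsRightIdeal J → J ⊆ I → J = {0} ∨ J = I)
    (hs : Nat.card I = p ^ s) :
    p ^ s - 1 ∣ Nat.card Rˣ := by
  have : Finite Rᵐᵒᵖ := Finite.of_equiv R MulOpposite.opEquiv
  have := hI.isSimpleModule_toSubmodule hne hmin
  have hdvd := card_sub_one_dvd_card_units (A := Rᵐᵒᵖ) (S := hI.toSubmodule)
  rwa [show Nat.card hI.toSubmodule = p ^ s from hs,
    Nat.card_congr (Units.opEquiv.toEquiv.trans MulOpposite.opEquiv.symm)] at hdvd

/-- Let `R` be a finite Frobenius ring of order `p^r` (`p` prime) having a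
minimal right ideal of size `p^s`.  Then `p^s − 1` divides `|R^×|`. -/
theorem stmt16 (R : Type*) [Ring R] [Fintype R] (hF : IsFrobeniusRing R)
    (p r s : ℕ) (hp : p.Prime) (hcard : Fintype.card R = p ^ r)
    (I : Set R) (hI : IsRightIdeal I) (hne : I ≠ {0})
    (hmin : ∀ J : Set R, IsRightIdeal J → J ⊆ I → J = {0} ∨ J = I)
    (hs : Nat.card I = p ^ s) :
    p ^ s - 1 ∣ Nat.card Rˣ :=
  stmt16_general R p s I hI hne hmin hs
end

section
/- Let C be a proper, regular, projective two-weight code of length n over a finite Frobenius ring R of prime power order p^s, with nonzero homogeneous weights w₁ < w₂ computed with γ = |R^×|. Then there exist integers r ≥ 0 and t > 0 with w₁ = p^r·t and w₂ = p^r·(t+1). -/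
/-
For a generating character `χ` of `R`, the homogeneous weight is
`w x = |Rˣ| - ∑ u : Rˣ, χ (x * u)`: the right-hand side satisfies the axioms, which determine a
function by Möbius inversion over principal left ideals. Möbius inversion over principal right
ideals, on which `∑_{y ∈ vR} χ (x * y)` is `|vR|` or `0`, shows that the sum over units is an
integer depending only on the right annihilator of `x`. So the weight of a codeword `c` is
`n |Rˣ| - ∑_{j, u} χ (c j * u)`, a constant minus a sum of characters of `C` that are pairwise
distinct by regularity and projectivity. At a nontrivial character `φ` of `C`, comparing
Fourier coefficients gives `(w₂ - w₁) ∑_{wt c = w₁} φ c = |C| m(φ) - w₂`, where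
`m(φ) ∈ {0, 1}` is the number of coordinate characters equal to `φ⁻¹`. Both values of `m` occur (otherwise the
weight would be constant on nonzero codewords) and the sum is an algebraic integer, so
`w₂ - w₁` divides `w₂` and `|C|`, a power of `p`.
-/

open Finset

theorem AddChar.sum_filter_mem_eq_zero {A : Type*} [AddCommGroup A] [Fintype A]
    {H : AddSubgroup A} [DecidablePred (· ∈ H)] (ψ : AddChar A ℂ) {a : A} (ha : a ∈ H)
    (hψa : ψ a ≠ 1) : ∑ x with x ∈ H, ψ x = 0 := by
  rw [sum_subtype _ (p := (· ∈ H)) (fun x => by simp)]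
  exact AddChar.sum_eq_zero_iff_ne_zero.mpr
    (AddChar.ne_zero_iff.mpr ⟨⟨a, ha⟩, hψa⟩ : ψ.compAddMonoidHom H.subtype ≠ 0)

theorem AddChar.isIntegral_apply {A : Type*} [AddCommGroup A] [Finite A] (ψ : AddChar A ℂ)
    (a : A) : IsIntegral ℤ (ψ a) := by
  have hpow : ψ a ^ Nat.card A = 1 := by
    rw [← AddChar.map_nsmul_eq_pow, card_nsmul_eq_zero', AddChar.map_zero_eq_one]
  exact IsIntegral.of_pow Nat.card_pos (hpow ▸ isIntegral_one)

theorem Int.dvd_of_mul_eq_of_isIntegral {d k : ℤ} {z : ℂ} (hz : IsIntegral ℤ z)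
    (h : (d : ℂ) * z = k) : d ∣ k := by
  rcases eq_or_ne d 0 with rfl | hd
  · rw [Int.cast_zero, zero_mul, eq_comm, Int.cast_eq_zero] at h
    simp [h]
  have hzq : z = algebraMap ℚ ℂ (k / d) := by
    have hd' : (d : ℂ) ≠ 0 := by exact_mod_cast hd
    rw [map_div₀, map_intCast, map_intCast, ← h, mul_div_cancel_left₀ _ hd']
  rw [hzq, isIntegral_algebraMap_iff (algebraMap ℚ ℂ).injective] at hz
  obtain ⟨m, hm⟩ := IsIntegrallyClosed.isIntegral_iff.mp hz
  refine ⟨m, ?_⟩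
  rw [eq_div_iff (by exact_mod_cast hd), algebraMap_int_eq, eq_intCast] at hm
  exact_mod_cast hm.symm.trans (mul_comm _ _)

-- Möbius inversion on a finite preorder: class sums are integral combinations of lower-set sums.
theorem Finset.sum_filter_antisymmRel_mem {α M : Type*} [Fintype α] [AddCommGroup M]
    (r : α → α → Prop) [DecidableRel r] (hrefl : ∀ x, r x x)
    (htrans : ∀ x y z, r x y → r y z → r x z) (A : AddSubgroup M) {f : α → M}
    (hf : ∀ x, ∑ y with r y x, f y ∈ A) (x : α) :
    ∑ y with r y x ∧ r x y, f y ∈ A := by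
  classical
  induction hn : #{y | r y x} using Nat.strong_induction_on generalizing x with
  | _ n ih =>
  let cls : α → Finset α := fun y => {z | r z y ∧ r y z}
  have hcls : ∀ y z, cls z = cls y ↔ r z y ∧ r y z := by
    intro y z
    refine ⟨fun h => ?_, fun ⟨hzy, hyz⟩ => ?_⟩
    · have : z ∈ cls y := h ▸ by simp [cls, hrefl]
      simpa [cls] using this
    · ext u
      simp only [cls, mem_filter, mem_univ, true_and]
      exact ⟨fun ⟨h1, h2⟩ => ⟨htrans _ _ _ h1 hzy, htrans _ _ _ hyz h2⟩,
        fun ⟨h1, h2⟩ => ⟨htrans _ _ _ h1 hyz, htrans _ _ _ hzy h2⟩⟩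
  set S : Finset α := {y | r y x ∧ ¬ r x y}
  have hS : ∑ y ∈ S, f y ∈ A := by
    rw [← sum_fiberwise_of_maps_to (g := cls) (t := S.image cls)
      fun y hy => mem_image_of_mem _ hy]
    refine A.sum_mem fun c hc => ?_
    obtain ⟨y, hy, rfl⟩ := mem_image.mp hc
    simp only [S, mem_filter, mem_univ, true_and] at hy
    have hfib : S.filter (fun z => cls z = cls y) = cls y := by
      ext z
      simp only [S, cls, hcls, mem_filter, mem_univ, true_and]
      exact ⟨fun h => h.2, fun h => ⟨⟨htrans _ _ _ h.1 hy.1,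
        fun hxz => hy.2 (htrans _ _ _ hxz h.1)⟩, h⟩⟩
    rw [hfib]
    refine ih _ ?_ y rfl
    rw [← hn]
    refine card_lt_card ⟨fun z hz => ?_, fun hsub => ?_⟩
    · simp only [mem_filter, mem_univ, true_and] at hz ⊢
      exact htrans _ _ _ hz hy.1
    · have := hsub (by simp [hrefl] : x ∈ ({y | r y x} : Finset α))
      simp only [mem_filter, mem_univ, true_and] at this
      exact hy.2 this
  have hsplit : ∑ y with r y x, f y = ∑ y with r y x ∧ r x y, f y + ∑ y ∈ S, f y := by
    rw [← sum_filter_add_sum_filter_not _ (r x ·), filter_filter, filter_filter]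
  have := A.sub_mem (hf x) hS
  rwa [hsplit, add_sub_cancel_right] at this

namespace AddChar

theorem map_sub_eq_one_of_eq {A M : Type*} [AddGroup A] [Monoid M] (ψ : AddChar A M) {a b : A}
    (h : ψ a = ψ b) : ψ (a - b) = 1 := by
  rw [sub_eq_add_neg, map_add_eq_mul, h, ← map_add_eq_mul, add_neg_cancel, map_zero_eq_one]

def IsGenerating {R : Type*} [Ring R] (χ : AddChar R ℂ) : Prop :=
  ∀ φ : AddChar R ℂ, ∃ r : R, ∀ x, φ x = χ (r * x)

variable {R : Type*} [Ring R] [Fintype R] {χ : AddChar R ℂ}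

theorem IsGenerating.eq_zero_of_forall_mul_left (hχ : χ.IsGenerating) {z : R}
    (h : ∀ r, χ (r * z) = 1) : z = 0 := by
  by_contra hz
  obtain ⟨φ, hφ⟩ := exists_apply_ne_zero.mpr hz
  obtain ⟨r, hr⟩ := hχ φ
  exact hφ ((hr z).trans (h r))

theorem IsGenerating.eq_zero_of_forall_mul_right (hχ : χ.IsGenerating) {z : R}
    (h : ∀ r, χ (z * r) = 1) : z = 0 := by
  have hinj : Function.Injective fun t : R => χ.compAddMonoidHom (AddMonoidHom.mulRight t) := by
    intro t t' htt'
    rw [← sub_eq_zero]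
    refine hχ.eq_zero_of_forall_mul_left fun r => ?_
    rw [mul_sub]
    exact χ.map_sub_eq_one_of_eq (DFunLike.congr_fun htt' r)
  -- `t ↦ χ (· * t)` is injective between sets of the same size, hence onto all characters
  obtain ⟨-, hsurj⟩ := (Fintype.bijective_iff_injective_and_card _).mpr ⟨hinj, card_eq.symm⟩
  by_contra hz
  obtain ⟨φ, hφ⟩ := exists_apply_ne_zero.mpr hz
  obtain ⟨t, rfl⟩ := hsurj φ
  exact hφ (h t)

end AddChar

section HomogeneousWeight

open scoped Classical
open Submodule (span)

variable {R : Type*} [Ring R] [Fintype R] {χ : AddChar R ℂ}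

noncomputable def unitSum (χ : AddChar R ℂ) (x : R) : ℂ :=
  ∑ u : Rˣ, χ (x * u)

theorem sum_mem_span_singleton_unitSum_eq_zero (hχ : χ.IsGenerating) {z : R} (hz : z ≠ 0) :
    ∑ y with y ∈ span R {z}, unitSum χ y = 0 := by
  simp only [unitSum]
  rw [sum_comm]
  refine sum_eq_zero fun u _ => ?_
  have hzu : z * u ≠ 0 := (Units.mul_left_eq_zero u).not.mpr hz
  obtain ⟨r, hr⟩ : ∃ r, χ (r * (z * u)) ≠ 1 := by
    by_contra! h
    exact hzu (hχ.eq_zero_of_forall_mul_left h)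
  exact AddChar.sum_filter_mem_eq_zero (H := (span R {z}).toAddSubgroup)
    (χ.compAddMonoidHom (AddMonoidHom.mulRight (u : R)))
    (Submodule.smul_mem _ r (Submodule.mem_span_singleton_self z))
    (by simpa [mul_assoc] using hr)

theorem sum_rightIdeal_apply_mul (hχ : χ.IsGenerating) (x v : R) :
    ∑ y with ∃ s, v * s = y, χ (x * y) =
      if x * v = 0 then (#{y | ∃ s, v * s = y} : ℂ) else 0 := by
  split_ifs with hxv
  · rw [Finset.cast_card]
    refine sum_congr rfl fun y hy => ?_
    obtain ⟨s, rfl⟩ := (mem_filter.mp hy).2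
    rw [← mul_assoc, hxv, zero_mul, AddChar.map_zero_eq_one]
  · obtain ⟨s, hs⟩ : ∃ s, χ (x * v * s) ≠ 1 := by
      by_contra! h
      exact hxv (hχ.eq_zero_of_forall_mul_right h)
    exact AddChar.sum_filter_mem_eq_zero (H := (AddMonoidHom.mulLeft v).range)
      (χ.compAddMonoidHom (AddMonoidHom.mulLeft x)) ⟨s, rfl⟩ (by simpa [mul_assoc] using hs)

theorem sum_units_eq_sum_filter {M : Type*} [AddCommMonoid M] (f : R → M) :
    ∑ u : Rˣ, f u = ∑ y with (∃ s, 1 * s = y) ∧ ∃ s, y * s = 1, f y := by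
  have hunit : ∀ y : R, ((∃ s, 1 * s = y) ∧ ∃ s, y * s = 1) ↔ IsUnit y := fun y => by
    simp [isUnit_iff_exists_inv]
  refine sum_nbij (↑) (fun u _ => mem_filter.mpr ⟨mem_univ _, (hunit u).mpr u.isUnit⟩)
    (fun u _ v _ h => Units.ext h) (fun y hy => ?_) (fun _ _ => rfl)
  obtain ⟨u, rfl⟩ := (hunit y).mp (mem_filter.mp hy).2
  exact ⟨u, mem_coe.mpr (mem_univ u), rfl⟩

theorem sum_units_mem {M : Type*} [AddCommGroup M] (A : AddSubgroup M) {f : R → M}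
    (hf : ∀ v, ∑ y with ∃ s, v * s = y, f y ∈ A) : ∑ u : Rˣ, f u ∈ A :=
  sum_units_eq_sum_filter f ▸ sum_filter_antisymmRel_mem (fun y v : R => ∃ s, v * s = y)
    (fun v => ⟨1, mul_one v⟩)
    (fun _ _ _ ⟨s, hs⟩ ⟨t, ht⟩ => ⟨t * s, by rw [← hs, ← ht, mul_assoc]⟩) A hf 1

theorem unitSum_eq_of_span_eq (hχ : χ.IsGenerating) {x y : R} (h : span R {x} = span R {y}) :
    unitSum χ x = unitSum χ y := by
  have hann : ∀ v, x * v = 0 ↔ y * v = 0 := by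
    obtain ⟨a, ha⟩ := Submodule.mem_span_singleton.mp
      (h ▸ Submodule.mem_span_singleton_self x)
    obtain ⟨b, hb⟩ := Submodule.mem_span_singleton.mp
      (h ▸ Submodule.mem_span_singleton_self y)
    intro v
    constructor
    · intro hv; rw [← hb, smul_eq_mul, mul_assoc, hv, mul_zero]
    · intro hv; rw [← ha, smul_eq_mul, mul_assoc, hv, mul_zero]
  have := sum_units_mem ⊥ (f := fun v => χ (x * v) - χ (y * v)) fun v => by
    rw [AddSubgroup.mem_bot, sum_sub_distrib, sum_rightIdeal_apply_mul hχ,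
      sum_rightIdeal_apply_mul hχ, if_congr (hann v) rfl rfl, sub_self]
  rw [AddSubgroup.mem_bot, sum_sub_distrib] at this
  exact sub_eq_zero.mp this

theorem exists_unitSum_eq_intCast (hχ : χ.IsGenerating) (x : R) :
    ∃ k : ℤ, unitSum χ x = k := by
  obtain ⟨k, hk⟩ := sum_units_mem (Int.castAddHom ℂ).range (f := fun v => χ (x * v))
    fun v => by
      rw [sum_rightIdeal_apply_mul hχ]
      split_ifs
      exacts [⟨_, Int.cast_natCast _⟩, zero_mem _]
  exact ⟨k, hk.symm⟩

theorem eq_zero_of_sum_span_singleton_eq_zero {f : R → ℂ}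
    (hcl : ∀ x y, span R {x} = span R {y} → f x = f y)
    (hsum : ∀ z, ∑ y with y ∈ span R {z}, f y = 0) (z : R) : f z = 0 := by
  have hspan : ∀ y z : R, y ∈ span R {z} → z ∈ span R {y} → span R {y} = span R {z} :=
    fun y z hyz hzy => le_antisymm ((Submodule.span_singleton_le_iff_mem _ _).mpr hyz)
      ((Submodule.span_singleton_le_iff_mem _ _).mpr hzy)
  have hclass := sum_filter_antisymmRel_mem (fun y z : R => y ∈ span R {z})
    Submodule.mem_span_singleton_self
    (fun x y z hxy hyz => (Submodule.span_singleton_le_iff_mem _ _).mpr hyz hxy) ⊥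
    (f := f) (fun z => (hsum z).symm ▸ zero_mem _) z
  rw [AddSubgroup.mem_bot, sum_congr rfl fun y hy =>
    hcl y z (hspan y z (mem_filter.mp hy).2.1 (mem_filter.mp hy).2.2), sum_const,
    nsmul_eq_mul] at hclass
  refine (mul_eq_zero.mp hclass).resolve_left (Nat.cast_ne_zero.mpr (card_ne_zero.mpr ⟨z, ?_⟩))
  simp [Submodule.mem_span_singleton_self]

theorem IsHomWeight.ofReal_eq_sub_unitSum (hχ : χ.IsGenerating) {w : R → ℝ}
    (hw : IsHomWeight R w (Nat.card Rˣ)) (z : R) : (w z : ℂ) = Nat.card Rˣ - unitSum χ z := by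
  refine sub_eq_zero.mp (eq_zero_of_sum_span_singleton_eq_zero
    (f := fun y => (w y : ℂ) - (Nat.card Rˣ - unitSum χ y)) (fun x y h => ?_) (fun z => ?_) z)
  · simp only [hw.2.1 x y h, unitSum_eq_of_span_eq hχ h]
  rcases eq_or_ne z 0 with rfl | hz
  · have h0 : ({y | y ∈ span R {(0 : R)}} : Finset R) = {0} := by ext; simp
    rw [h0, sum_singleton]
    simp [hw.1, unitSum, Nat.card_eq_fintype_card]
  have hsum := hw.2.2 z hz
  have hset : (span R {z} : Set R) = ↑({y | y ∈ span R {z}} : Finset R) := by ext; simp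
  rw [hset, finsum_mem_coe_finset] at hsum
  simp only [Nat.card_eq_fintype_card, Fintype.card_subtype] at hsum
  rw [sum_sub_distrib, sum_sub_distrib, sum_mem_span_singleton_unitSum_eq_zero hχ hz,
    ← Complex.ofReal_sum, hsum, sum_const, nsmul_eq_mul, Nat.card_eq_fintype_card]
  push_cast
  ring

theorem IsHomWeight.exists_eq_intCast (hχ : χ.IsGenerating) {w : R → ℝ}
    (hw : IsHomWeight R w (Nat.card Rˣ)) (z : R) : ∃ k : ℤ, w z = k := by
  obtain ⟨k, hk⟩ := exists_unitSum_eq_intCast hχ z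
  refine ⟨Nat.card Rˣ - k, Complex.ofReal_injective ?_⟩
  rw [hw.ofReal_eq_sub_unitSum hχ z, hk]
  push_cast
  rfl

end HomogeneousWeight

section TwoWeight

variable {Q ι : Type*} [AddCommGroup Q] [Fintype ι] {ψ : ι → AddChar Q ℂ} {N : ℂ}

theorem sum_mul_addChar_eq_of_eq_sub_sum [Fintype Q] {F : Q → ℂ}
    (hF : ∀ q, F q = N - ∑ i, ψ i q) {φ : AddChar Q ℂ} (hφ : φ ≠ 0) :
    ∑ q, F q * φ q = -(Fintype.card Q * #{i | ψ i + φ = 0}) := by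
  simp_rw [hF, sub_mul, sum_sub_distrib, ← mul_sum, sum_mul]
  rw [sum_comm]
  simp_rw [← AddChar.add_apply, AddChar.sum_eq_ite]
  rw [if_neg hφ]
  simp [sum_ite, mul_comm]

theorem exists_ne_zero_notMem_range_of_injective [Fintype Q] {F : Q → ℂ}
    (hψ : Function.Injective ψ) (hF : ∀ q, F q = N - ∑ i, ψ i q) {q₁ q₂ : Q}
    (hq₁ : q₁ ≠ 0) (hq₂ : q₂ ≠ 0) (hne : F q₁ ≠ F q₂) :
    ∃ φ ≠ 0, φ ∉ Set.range ψ := by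
  by_contra! hrange
  have hsum : ∀ q ≠ 0, ∑ i, ψ i q = -#(univ \ univ.image ψ) := by
    intro q hq
    have hcompl : ∑ φ ∈ univ \ univ.image ψ, φ q = #(univ \ univ.image ψ) := by
      rw [cast_card]
      refine sum_congr rfl fun φ hφ => ?_
      by_contra h
      have : φ ≠ 0 := fun h0 => h (h0 ▸ AddChar.zero_apply q)
      obtain ⟨i, rfl⟩ := hrange φ this
      simp at hφ
    rw [← sum_image (f := fun φ : AddChar Q ℂ => φ q) hψ.injOn, eq_neg_iff_add_eq_zero,
      ← hcompl, add_comm, sum_sdiff (subset_univ _),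
      AddChar.sum_apply_eq_zero_iff_ne_zero.mpr hq]
  exact hne (by rw [hF, hF, hsum q₁ hq₁, hsum q₂ hq₂])

theorem exists_ne_zero_of_eq_sub_sum {F : Q → ℂ} (hF : ∀ q, F q = N - ∑ i, ψ i q)
    {q₁ q₂ : Q} (hne : F q₁ ≠ F q₂) : ∃ i, ψ i ≠ 0 := by
  by_contra! h
  exact hne (by simp [hF, h])

theorem sub_mul_sum_eq_of_eq_sub_sum [Fintype Q] [DecidableEq Q] {F : Q → ℤ}
    (hF : ∀ q, (F q : ℂ) = N - ∑ i, ψ i q) (hF0 : F 0 = 0) {a b : ℤ} (hab : a ≠ b)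
    (hval : ∀ q ≠ 0, F q = a ∨ F q = b) {φ : AddChar Q ℂ} (hφ : φ ≠ 0) :
    ((b - a : ℤ) : ℂ) * ∑ q with q ≠ 0 ∧ F q = a, φ q
      = Fintype.card Q * #{i | ψ i + φ = 0} - b := by
  have hpt : ∀ q, (F q : ℂ) = b - (if q = 0 then (b : ℂ) else 0) -
      ((b - a : ℤ) : ℂ) * if q ≠ 0 ∧ F q = a then 1 else 0 := by
    intro q
    rcases eq_or_ne q 0 with rfl | hq
    · simp [hF0]
    rcases hval q hq with h | h
    · simp [hq, h]
    · simp [hq, h, hab.symm]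
  have h := sum_mul_addChar_eq_of_eq_sub_sum (F := fun q => (F q : ℂ)) hF hφ
  simp_rw [hpt, sub_mul, sum_sub_distrib, ← mul_sum, ite_mul, zero_mul, mul_assoc, ite_mul,
    one_mul, zero_mul] at h
  rw [sum_ite_eq' univ (0 : Q), if_pos (mem_univ _), ← mul_sum, ← sum_filter,
    AddChar.map_zero_eq_one, mul_one, AddChar.sum_eq_ite φ, if_neg hφ, mul_zero, zero_sub] at h
  linear_combination -h

theorem sub_dvd_of_twoWeight [Fintype Q] {F : Q → ℤ} (hψ : Function.Injective ψ)
    (hF : ∀ q, (F q : ℂ) = N - ∑ i, ψ i q) (hF0 : F 0 = 0) {a b : ℤ} (hab : a ≠ b)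
    (hval : ∀ q ≠ 0, F q = a ∨ F q = b) (ha : ∃ q ≠ 0, F q = a)
    (hb : ∃ q ≠ 0, F q = b) :
    b - a ∣ b ∧ b - a ∣ Fintype.card Q := by
  classical
  obtain ⟨q₁, hq₁, rfl⟩ := ha
  obtain ⟨q₂, hq₂, rfl⟩ := hb
  have hne : (F q₁ : ℂ) ≠ F q₂ := by exact_mod_cast hab
  obtain ⟨φ₀, hφ₀, hφ₀ψ⟩ :=
    exists_ne_zero_notMem_range_of_injective hψ hF hq₁ hq₂ hne
  obtain ⟨i₀, hi₀⟩ := exists_ne_zero_of_eq_sub_sum hF hne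
  have hint : ∀ φ : AddChar Q ℂ, IsIntegral ℤ (∑ q with q ≠ 0 ∧ F q = F q₁, φ q) :=
    fun φ => IsIntegral.sum _ fun q _ => φ.isIntegral_apply q
  have h₀ := sub_mul_sum_eq_of_eq_sub_sum hF hF0 hab hval (neg_ne_zero.mpr hφ₀)
  have h₁ := sub_mul_sum_eq_of_eq_sub_sum hF hF0 hab hval (neg_ne_zero.mpr hi₀)
  have hcard₀ : #{i | ψ i + -φ₀ = 0} = 0 := by
    simp only [card_eq_zero, filter_eq_empty_iff, ← sub_eq_add_neg, sub_eq_zero]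
    exact fun i _ hi => hφ₀ψ ⟨i, hi⟩
  have hcard₁ : #{i | ψ i + -ψ i₀ = 0} = 1 := by
    simp only [← sub_eq_add_neg, sub_eq_zero, hψ.eq_iff]
    exact card_eq_one.mpr ⟨i₀, by ext; simp⟩
  rw [hcard₀, Nat.cast_zero, mul_zero, zero_sub] at h₀
  rw [hcard₁, Nat.cast_one, mul_one] at h₁
  have hd₀ := Int.dvd_of_mul_eq_of_isIntegral (hint _) (k := -F q₂)
    (by rw [h₀]; push_cast; ring)
  have hd₁ := Int.dvd_of_mul_eq_of_isIntegral (hint _) (k := Fintype.card Q - F q₂)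
    (by rw [h₁]; push_cast; ring)
  refine ⟨dvd_neg.mp hd₀, ?_⟩
  simpa using dvd_add hd₁ (dvd_neg.mp hd₀)

end TwoWeight

theorem exists_pow_mul_eq_of_sub_dvd {p m : ℕ} (hp : p.Prime) {a b : ℤ} (ha : 0 < a)
    (hab : a < b) (hb : b - a ∣ b) (hpow : b - a ∣ (p ^ m : ℕ)) :
    ∃ r t : ℕ, 0 < t ∧ a = p ^ r * t ∧ b = p ^ r * (t + 1) := by
  obtain ⟨d, hd⟩ : ∃ d : ℕ, b - a = d := ⟨(b - a).toNat, by omega⟩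
  rw [hd, Int.natCast_dvd_natCast] at hpow
  obtain ⟨r, -, rfl⟩ := (Nat.dvd_prime_pow hp).mp hpow
  push_cast at hd
  obtain ⟨t, ht⟩ : (p : ℤ) ^ r ∣ a := by
    have := dvd_sub hb (dvd_refl (b - a))
    rwa [sub_sub_cancel, hd] at this
  have htpos : 0 < t := pos_of_mul_pos_right (ht ▸ ha) (by positivity)
  lift t to ℕ using htpos.le
  exact ⟨r, t, by exact_mod_cast htpos, ht, by linear_combination hd + ht⟩

section LinearCode

variable {R : Type*} [Ring R] {n ℓ : ℕ} {χ : AddChar R ℂ}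

def coordChar (χ : AddChar R ℂ) (C : Submodule R (Fin n → R)) (j : Fin n) (u : R) :
    AddChar C ℂ :=
  χ.compAddMonoidHom ((AddMonoidHom.mulRight u).comp
    ((Pi.evalAddMonoidHom (fun _ => R) j).comp C.toAddSubgroup.subtype))

def IsRegularGenerator (Y : Matrix (Fin ℓ) (Fin n) R) : Prop :=
  ∀ j : Fin n, ∀ r : R, ∃ x : Fin ℓ → R, ∑ i, x i * Y i j = r

def IsProjectiveGenerator (Y : Matrix (Fin ℓ) (Fin n) R) : Prop :=
  ∀ j j' : Fin n,
    (Set.range fun r : R => fun i => Y i j * r) = (Set.range fun r : R => fun i => Y i j' * r) →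
      j = j'

@[simp] theorem coordChar_apply (C : Submodule R (Fin n → R)) (j : Fin n) (u : R) (c : C) :
    coordChar χ C j u c = χ (c.1 j * u) := rfl

theorem mul_eq_of_coordChar_eq [Fintype R] (hχ : χ.IsGenerating) {C : Submodule R (Fin n → R)}
    {Y : Matrix (Fin ℓ) (Fin n) R}
    (hC : (C : Set (Fin n → R)) = Set.range fun x : Fin ℓ → R => fun j => ∑ i, x i * Y i j)
    {j j' : Fin n} {u u' : R} (h : coordChar χ C j u = coordChar χ C j' u') (i : Fin ℓ) :
    Y i j * u = Y i j' * u' := by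
  rw [← sub_eq_zero]
  refine hχ.eq_zero_of_forall_mul_left fun r => ?_
  have hc : (fun j => r * Y i j) ∈ C := by
    rw [← SetLike.mem_coe, hC]
    exact ⟨Pi.single i r, funext fun j => by simp [Pi.single_apply]⟩
  have := DFunLike.congr_fun h ⟨_, hc⟩
  simp only [coordChar_apply] at this
  rw [mul_sub, ← mul_assoc, ← mul_assoc]
  exact χ.map_sub_eq_one_of_eq this

theorem eq_of_forall_mul_eq {Y : Matrix (Fin ℓ) (Fin n) R}
    (hreg : IsRegularGenerator Y) (hproj : IsProjectiveGenerator Y)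
    {j j' : Fin n} {u u' : Rˣ} (h : ∀ i, Y i j * u = Y i j' * u') : j = j' ∧ u = u' := by
  have hmul : ∀ {j j' : Fin n} {u u' : Rˣ}, (∀ i, Y i j * u = Y i j' * u') →
      ∀ r : R, ∃ s, (fun i => Y i j' * s) = fun i => Y i j * r := fun {j j' u u'} h r =>
    ⟨u' * (↑u⁻¹ * r), funext fun i => by
      rw [← mul_assoc, ← h i, mul_assoc, Units.mul_inv_cancel_left]⟩
  obtain rfl : j = j' := hproj j j' (Set.Subset.antisymm
    (Set.range_subset_iff.mpr fun r => hmul h r)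
    (Set.range_subset_iff.mpr fun r => hmul (fun i => (h i).symm) r))
  refine ⟨rfl, Units.ext ?_⟩
  obtain ⟨x, hx⟩ := hreg j 1
  calc (u : R) = (∑ i, x i * Y i j) * u := by rw [hx, one_mul]
    _ = (∑ i, x i * Y i j) * u' := by simp only [sum_mul, mul_assoc, h]
    _ = u' := by rw [hx, one_mul]

theorem coordChar_injective [Fintype R] (hχ : χ.IsGenerating) {C : Submodule R (Fin n → R)}
    {Y : Matrix (Fin ℓ) (Fin n) R}
    (hC : (C : Set (Fin n → R)) = Set.range fun x : Fin ℓ → R => fun j => ∑ i, x i * Y i j)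
    (hreg : IsRegularGenerator Y) (hproj : IsProjectiveGenerator Y) :
    Function.Injective fun ju : Fin n × Rˣ => coordChar χ C ju.1 ju.2 := fun _ _ h =>
  Prod.ext_iff.mpr (eq_of_forall_mul_eq hreg hproj (mul_eq_of_coordChar_eq hχ hC h))

open scoped Classical in
theorem ofReal_wN_eq [Fintype R] (hχ : χ.IsGenerating) {w : R → ℝ}
    (hw : IsHomWeight R w (Nat.card Rˣ)) (c : Fin n → R) :
    (wN w c : ℂ) = n * Nat.card Rˣ - ∑ ju : Fin n × Rˣ, χ (c ju.1 * ju.2) := by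
  simp [wN, hw.ofReal_eq_sub_unitSum hχ, unitSum, Fintype.sum_prod_type]

theorem exists_wN_eq_intCast [Fintype R] (hχ : χ.IsGenerating) {w : R → ℝ}
    (hw : IsHomWeight R w (Nat.card Rˣ)) (c : Fin n → R) : ∃ k : ℤ, wN w c = k := by
  choose k hk using hw.exists_eq_intCast hχ
  exact ⟨∑ j, k (c j), by simp [wN, hk]⟩

theorem Submodule.card_dvd_card_pow [Fintype R] (C : Submodule R (Fin n → R)) [Fintype C] :
    Fintype.card C ∣ Fintype.card R ^ n := by
  have hcard_fun : Nat.card (Fin n → R) = Fintype.card R ^ n := by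
    rw [Nat.card_eq_fintype_card, Fintype.card_fun, Fintype.card_fin]
  rw [← Nat.card_eq_fintype_card, ← hcard_fun]
  exact AddSubgroup.card_addSubgroup_dvd_card C.toAddSubgroup

theorem sub_dvd_of_twoWeight_code [Fintype R] (hχ : χ.IsGenerating) {w : R → ℝ}
    (hw : IsHomWeight R w (Nat.card Rˣ)) {C : Submodule R (Fin n → R)} [Fintype C]
    {Y : Matrix (Fin ℓ) (Fin n) R}
    (hC : (C : Set (Fin n → R)) = Set.range fun x : Fin ℓ → R => fun j => ∑ i, x i * Y i j)
    (hreg : IsRegularGenerator Y) (hproj : IsProjectiveGenerator Y)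
    {a b : ℤ} (hab : a ≠ b)
    (htw : {x : ℝ | ∃ c ∈ C, c ≠ 0 ∧ wN w c = x} = {(a : ℝ), (b : ℝ)}) :
    b - a ∣ b ∧ b - a ∣ Fintype.card C := by
  classical
  choose k hk using hw.exists_eq_intCast hχ
  let F : C → ℤ := fun c => ∑ j, k (c.1 j)
  have hFw : ∀ c : C, (F c : ℝ) = wN w (c : Fin n → R) := fun c => by simp [F, wN, hk]
  have hattained : ∀ x : ℤ, (x : ℝ) ∈ ({(a : ℝ), (b : ℝ)} : Set ℝ) →
      ∃ c ≠ 0, F c = x := by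
    intro x hx
    obtain ⟨c, hcC, hc, hcx⟩ := htw ▸ hx
    exact ⟨⟨c, hcC⟩, by simpa using hc, by exact_mod_cast (hFw ⟨c, hcC⟩).trans hcx⟩
  refine sub_dvd_of_twoWeight (coordChar_injective hχ hC hreg hproj) (N := n * Nat.card Rˣ)
    (fun c => ?_) ?_ hab (fun c hc => ?_) (hattained a (by simp)) (hattained b (by simp))
  · rw [← Complex.ofReal_intCast, hFw, ofReal_wN_eq hχ hw]
    rfl
  · exact_mod_cast (hFw 0).trans (by simp [wN, hw.1] : wN w ((0 : C) : Fin n → R) = 0)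
  · have : wN w (c : Fin n → R) ∈ ({(a : ℝ), (b : ℝ)} : Set ℝ) := by
      rw [← htw]
      exact ⟨c, c.2, by simpa using hc, rfl⟩
    simpa [← hFw] using this

end LinearCode

theorem stmt18_general (R : Type*) [Ring R] [Fintype R]
    (hF : IsFrobeniusRing R)
    (p e : ℕ) (hp : p.Prime) (hcard : Fintype.card R = p ^ e) (w : R → ℝ) (hw : IsHomWeight R w (Nat.card Rˣ : ℝ))
    (ℓ n : ℕ) (Y : Matrix (Fin ℓ) (Fin n) R)
    (C : Submodule R (Fin n → R)) [Fintype ↥C]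
    (hC : (C : Set (Fin n → R)) = Set.range fun x : Fin ℓ → R => fun j => ∑ i, x i * Y i j)
    (hreg : ∀ j : Fin n, ∀ r : R, ∃ x : Fin ℓ → R, ∑ i, x i * Y i j = r)
    (hproj : ∀ j j' : Fin n,
      (Set.range fun r : R => fun i => Y i j * r)
        = (Set.range fun r : R => fun i => Y i j' * r) → j = j')
    (w₁ w₂ : ℝ) (hw₁pos : 0 < w₁) (hw₁₂ : w₁ < w₂)
    (htw : {x : ℝ | ∃ c ∈ C, c ≠ 0 ∧ wN w c = x} = {w₁, w₂})
    :
    ∃ r t : ℕ, 0 < t ∧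
      w₁ = (p : ℝ) ^ r * t ∧ w₂ = (p : ℝ) ^ r * (t + 1) := by
  obtain ⟨χ, hχ⟩ := hF
  have hint : ∀ x ∈ ({w₁, w₂} : Set ℝ), ∃ k : ℤ, x = k := fun x hx => by
    obtain ⟨c, -, -, rfl⟩ := htw ▸ hx
    exact exists_wN_eq_intCast hχ hw c
  obtain ⟨a, rfl⟩ := hint w₁ (by simp)
  obtain ⟨b, rfl⟩ := hint w₂ (by simp)
  obtain ⟨hdvd, hdvd_card⟩ :=
    sub_dvd_of_twoWeight_code hχ hw hC hreg hproj (by exact_mod_cast hw₁₂.ne) htw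
  have hcard_C : Fintype.card C ∣ p ^ (e * n) := by
    rw [pow_mul, ← hcard]
    exact C.card_dvd_card_pow
  obtain ⟨r, t, ht, rfl, rfl⟩ := exists_pow_mul_eq_of_sub_dvd hp (by exact_mod_cast hw₁pos)
    (by exact_mod_cast hw₁₂) hdvd (hdvd_card.trans (Int.natCast_dvd_natCast.mpr hcard_C))
  exact ⟨r, t, ht, by push_cast; ring, by push_cast; ring⟩

/-- Let `C ≤ R^n` be a proper, regular, projective two-weight code over a
finite Frobenius ring `R` of prime power order `p^e`, with nonzero homogeneous weights
`w₁ < w₂` computed with `γ = |R^×|`.  Then there exist integers `r ≥ 0` and `t > 0` with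
`w₁ = p^r·t` and `w₂ = p^r·(t+1)`. -/
theorem stmt18 (R : Type*) [Ring R] [Fintype R]
    (hF : IsFrobeniusRing R)
    (p e : ℕ) (hp : p.Prime) (hcard : Fintype.card R = p ^ e) (w : R → ℝ) (hw : IsHomWeight R w (Nat.card Rˣ : ℝ))
    (ℓ n : ℕ) (Y : Matrix (Fin ℓ) (Fin n) R)
    (C : Submodule R (Fin n → R)) [Fintype ↥C]
    (hC : (C : Set (Fin n → R)) = Set.range fun x : Fin ℓ → R => fun j => ∑ i, x i * Y i j)
    (hreg : ∀ j : Fin n, ∀ r : R, ∃ x : Fin ℓ → R, ∑ i, x i * Y i j = r)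
    (hproj : ∀ j j' : Fin n,
      (Set.range fun r : R => fun i => Y i j * r)
        = (Set.range fun r : R => fun i => Y i j' * r) → j = j')
    (hproper : ∀ c ∈ C, wN w c = 0 → c = 0)
    (w₁ w₂ : ℝ) (hw₁pos : 0 < w₁) (hw₁₂ : w₁ < w₂)
    (htw : {x : ℝ | ∃ c ∈ C, c ≠ 0 ∧ wN w c = x} = {w₁, w₂})
    :
    ∃ r t : ℕ, 0 < t ∧
      w₁ = (p : ℝ) ^ r * t ∧ w₂ = (p : ℝ) ^ r * (t + 1) :=
  stmt18_general R hF p e hp hcard w hw ℓ n Y C hC hreg hproj w₁ w₂ hw₁pos hw₁₂ htw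
end
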